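/- arXiv:2604.24343 — 13 statements merged into one kernel-verified Lean document; each statement's English description precedes it below -/
import Mathlib

section
/- Let G be an \aabb-free ordered graph and let (x, y, z) and (x', y', z') be two seagulls in G such that the sets {x, y, z} and {x', y', z'} are disjoint. Then there is an edge of G with one endpoint in {x, y, z} and the other endpoint in {x', y', z'}. -/
/-- In an `aabb`-free ordered graph, any two vertex-disjoint seagulls
are joined by an edge. -/
theorem stmt_3 {V : Type*} [Fintype V] [LinearOrder V] (G : SimpleGraph V)
    (hfree : ¬ ∃ a b c d : V, a < b ∧ b < c ∧ c < d ∧ G.Adj a b ∧ G.Adj c d ∧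
      ¬ G.Adj a c ∧ ¬ G.Adj a d ∧ ¬ G.Adj b c ∧ ¬ G.Adj b d)
    (x y z x' y' z' : V)
    (hxy : x < y) (hyz : y < z) (hexy : G.Adj x y) (heyz : G.Adj y z)
    (hxy' : x' < y') (hyz' : y' < z') (hexy' : G.Adj x' y') (heyz' : G.Adj y' z')
    (hdisj : ({x, y, z} : Set V) ∩ ({x', y', z'} : Set V) = ∅) :
    ∃ p ∈ ({x, y, z} : Set V), ∃ q ∈ ({x', y', z'} : Set V), G.Adj p q := by
  by_contra h
  push_neg at h
  have hyy' : y ≠ y' := by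
    intro he
    have : y ∈ ({x, y, z} : Set V) ∩ ({x', y', z'} : Set V) := by
      constructor <;> simp [he]
    rw [hdisj] at this
    exact this
  apply hfree
  rcases hyy'.lt_or_gt with hlt | hlt
  · exact ⟨x, y, y', z', hxy, hlt, hyz', hexy, heyz',
      h x (by simp) y' (by simp), h x (by simp) z' (by simp),
      h y (by simp) y' (by simp), h y (by simp) z' (by simp)⟩
  · exact ⟨x', y', y, z, hxy', hlt, hyz, hexy', heyz,
      fun a => h y (by simp) x' (by simp) a.symm,
      fun a => h z (by simp) x' (by simp) a.symm,
      fun a => h y (by simp) y' (by simp) a.symm,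
      fun a => h z (by simp) y' (by simp) a.symm⟩
end

section
/- Let G be a finite \aabb-free ordered graph that is not bipartite (i.e., V(G) cannot be partitioned into two independent sets). Then there exists a vertex v of G that belongs to some seagull and such that the number of seagulls (x, y, z) of G with {x, y, z} ∩ N[v] ≠ ∅ is at least one third of the total number of seagulls of G. -/
private def seaSet {V : Type*} [LinearOrder V] (G : SimpleGraph V) : Set (V × V × V) :=
  {t : V × V × V | t.1 < t.2.1 ∧ t.2.1 < t.2.2 ∧ G.Adj t.1 t.2.1 ∧ G.Adj t.2.1 t.2.2}

private def covSet {V : Type*} [LinearOrder V] (G : SimpleGraph V) (v : V) : Set (V × V × V) :=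
  {t : V × V × V |
    (t.1 < t.2.1 ∧ t.2.1 < t.2.2 ∧ G.Adj t.1 t.2.1 ∧ G.Adj t.2.1 t.2.2) ∧
    ((t.1 = v ∨ G.Adj v t.1) ∨ (t.2.1 = v ∨ G.Adj v t.2.1) ∨
      (t.2.2 = v ∨ G.Adj v t.2.2))}

/-- In a finite non-bipartite `aabb`-free ordered graph there is a vertex `v`
belonging to a seagull whose closed neighbourhood intersects at least one third of all
seagulls. -/
theorem stmt_4 {V : Type*} [Fintype V] [LinearOrder V] (G : SimpleGraph V)
    (hfree : ¬ ∃ a b c d : V, a < b ∧ b < c ∧ c < d ∧ G.Adj a b ∧ G.Adj c d ∧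
      ¬ G.Adj a c ∧ ¬ G.Adj a d ∧ ¬ G.Adj b c ∧ ¬ G.Adj b d)
    (hnotbip : ¬ ∃ A B : Set V,
      (∀ v : V, v ∈ A ∨ v ∈ B) ∧
      (∀ v : V, ¬ (v ∈ A ∧ v ∈ B)) ∧
      (∀ u ∈ A, ∀ w ∈ A, ¬ G.Adj u w) ∧
      (∀ u ∈ B, ∀ w ∈ B, ¬ G.Adj u w)) :
    ∃ v : V,
      (∃ x y z : V, x < y ∧ y < z ∧ G.Adj x y ∧ G.Adj y z ∧ (v = x ∨ v = y ∨ v = z)) ∧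
      ({t : V × V × V |
          t.1 < t.2.1 ∧ t.2.1 < t.2.2 ∧ G.Adj t.1 t.2.1 ∧ G.Adj t.2.1 t.2.2}).ncard ≤
        3 * ({t : V × V × V |
          (t.1 < t.2.1 ∧ t.2.1 < t.2.2 ∧ G.Adj t.1 t.2.1 ∧ G.Adj t.2.1 t.2.2) ∧
          ((t.1 = v ∨ G.Adj v t.1) ∨ (t.2.1 = v ∨ G.Adj v t.2.1) ∨
            (t.2.2 = v ∨ G.Adj v t.2.2))}).ncard := by
  classical
  -- Step 1: a seagull exists
  obtain ⟨x, y, z, hxy, hyz, haxy, hayz⟩ :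
      ∃ x y z : V, x < y ∧ y < z ∧ G.Adj x y ∧ G.Adj y z := by
    by_contra hno
    push_neg at hno
    refine hnotbip ⟨{v : V | ∃ u, u < v ∧ G.Adj u v}, {v : V | ¬ ∃ u, u < v ∧ G.Adj u v},
      fun v => em _, fun v h => h.2 h.1, ?_, ?_⟩
    · rintro u ⟨t, htu, hat⟩ w ⟨s, hsw, has⟩ hadj
      rcases lt_trichotomy u w with h | h | h
      · exact hno t u w htu h hat hadj
      · exact G.irrefl (h ▸ hadj)
      · exact hno s w u hsw h has hadj.symm
    · intro u hu w hw hadj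
      rcases lt_trichotomy u w with h | h | h
      · exact hw ⟨u, h, hadj⟩
      · exact G.irrefl (h ▸ hadj)
      · exact hu ⟨w, h, hadj.symm⟩
  -- Step 2: every seagull meets N[x] ∪ N[y] ∪ N[z]
  have hcov : seaSet G ⊆ covSet G x ∪ covSet G y ∪ covSet G z := by
    rintro ⟨c, d, e⟩ ht
    obtain ⟨hcd, hde, hacd, hade⟩ := ht
    simp only [covSet, Set.mem_union, Set.mem_setOf_eq] at *
    by_contra hcon
    have Px : ¬ ((c = x ∨ G.Adj x c) ∨ (d = x ∨ G.Adj x d) ∨ (e = x ∨ G.Adj x e)) :=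
      fun h => hcon (Or.inl (Or.inl ⟨⟨hcd, hde, hacd, hade⟩, h⟩))
    have Py : ¬ ((c = y ∨ G.Adj y c) ∨ (d = y ∨ G.Adj y d) ∨ (e = y ∨ G.Adj y e)) :=
      fun h => hcon (Or.inl (Or.inr ⟨⟨hcd, hde, hacd, hade⟩, h⟩))
    have Pz : ¬ ((c = z ∨ G.Adj z c) ∨ (d = z ∨ G.Adj z d) ∨ (e = z ∨ G.Adj z e)) :=
      fun h => hcon (Or.inr ⟨⟨hcd, hde, hacd, hade⟩, h⟩)
    push_neg at Px Py Pz
    obtain ⟨⟨hcx, haxc⟩, ⟨hdx, haxd⟩, ⟨hex, haxe⟩⟩ := Px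
    obtain ⟨⟨hcy, hayc⟩, ⟨hdy, hayd⟩, ⟨hey, haye⟩⟩ := Py
    obtain ⟨⟨hcz, hazc⟩, ⟨hdz, hazd⟩, ⟨hez, haze⟩⟩ := Pz
    rcases lt_trichotomy y d with h | h | h
    · -- x < y < d < e : edges xy, de, no cross edges
      exact hfree ⟨x, y, d, e, hxy, h, hde, haxy, hade, haxd, haxe, hayd, haye⟩
    · exact hdy h.symm
    · -- consider c vs z via pair (c,d),(y,z): d < y gives c < d < y < z
      exact hfree ⟨c, d, y, z, hcd, h, hyz, hacd, hayz,
        fun hh => hayc hh.symm, fun hh => hazc hh.symm,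
        fun hh => hayd hh.symm, fun hh => hazd hh.symm⟩
  -- Step 3: counting
  have hle : (seaSet G).ncard ≤
      (covSet G x).ncard + (covSet G y).ncard + (covSet G z).ncard := by
    have h1 : (seaSet G).ncard ≤ (covSet G x ∪ covSet G y ∪ covSet G z).ncard :=
      Set.ncard_le_ncard hcov (Set.toFinite _)
    have h2 := Set.ncard_union_le (covSet G x ∪ covSet G y) (covSet G z)
    have h3 := Set.ncard_union_le (covSet G x) (covSet G y)
    omega
  have done : ∀ v : V, v = x ∨ v = y ∨ v = z →
      (seaSet G).ncard ≤ 3 * (covSet G v).ncard →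
      ∃ v : V,
      (∃ x y z : V, x < y ∧ y < z ∧ G.Adj x y ∧ G.Adj y z ∧ (v = x ∨ v = y ∨ v = z)) ∧
      ({t : V × V × V |
          t.1 < t.2.1 ∧ t.2.1 < t.2.2 ∧ G.Adj t.1 t.2.1 ∧ G.Adj t.2.1 t.2.2}).ncard ≤
        3 * ({t : V × V × V |
          (t.1 < t.2.1 ∧ t.2.1 < t.2.2 ∧ G.Adj t.1 t.2.1 ∧ G.Adj t.2.1 t.2.2) ∧
          ((t.1 = v ∨ G.Adj v t.1) ∨ (t.2.1 = v ∨ G.Adj v t.2.1) ∨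
            (t.2.2 = v ∨ G.Adj v t.2.2))}).ncard :=
    fun v hv hn => ⟨v, ⟨x, y, z, hxy, hyz, haxy, hayz, hv⟩, hn⟩
  rcases le_total (covSet G x).ncard (covSet G y).ncard with h1 | h1 <;>
    rcases le_total (covSet G y).ncard (covSet G z).ncard with h2 | h2 <;>
    rcases le_total (covSet G x).ncard (covSet G z).ncard with h3 | h3
  · exact done z (Or.inr (Or.inr rfl)) (by omega)
  · exact done z (Or.inr (Or.inr rfl)) (by omega)
  · exact done y (Or.inr (Or.inl rfl)) (by omega)
  · exact done y (Or.inr (Or.inl rfl)) (by omega)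
  · exact done z (Or.inr (Or.inr rfl)) (by omega)
  · exact done x (Or.inl rfl) (by omega)
  · exact done y (Or.inr (Or.inl rfl)) (by omega)
  · exact done x (Or.inl rfl) (by omega)
end

section
/- Let k ≥ 1 and let G be an ordered graph containing no configuration of the following form: vertices a ≺ b ≺ c ≺ d together with a k-element vertex set I satisfying b ≺ I ≺ c, such that ab ∈ E(G), cd ∈ E(G), and no other pair of vertices among {a, b, c, d} ∪ I is adjacent. Let L, I₀, R be vertex sets of G with L ≺ I₀ ≺ R, where I₀ is an independent set of size k and there are no edges between I₀ and L ∪ R. Then: (i) if u, v ∈ L and uv ∈ E(G), then R ∖ N[{u, v}] is an independent set; and (ii) if u, v ∈ R and uv ∈ E(G), then L ∖ N[{u, v}] is an independent set. -/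

private lemma stmt6_aux {V : Type*} [LinearOrder V] (G : SimpleGraph V)
    (k : ℕ)
    (hfree : ¬ ∃ (a b c d : V) (I : Finset V),
      a < b ∧ b < c ∧ c < d ∧ (∀ i ∈ I, b < i ∧ i < c) ∧ I.card = k ∧
      G.Adj a b ∧ G.Adj c d ∧
      (∀ p q : V, (p = a ∨ p = b ∨ p = c ∨ p = d ∨ p ∈ I) →
        (q = a ∨ q = b ∨ q = c ∨ q = d ∨ q ∈ I) →
        G.Adj p q →
        ((p = a ∧ q = b) ∨ (p = b ∧ q = a) ∨ (p = c ∧ q = d) ∨ (p = d ∧ q = c))))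
    (I : Finset V) (hIcard : I.card = k)
    (hIindep : ∀ i ∈ I, ∀ j ∈ I, ¬ G.Adj i j)
    (a b c d : V) (hab : a < b) (hbc : b < c) (hcd : c < d)
    (hbI : ∀ i ∈ I, b < i) (hIc : ∀ i ∈ I, i < c)
    (hIsep : ∀ i ∈ I, ∀ w, (w = a ∨ w = b ∨ w = c ∨ w = d) → ¬ G.Adj i w)
    (eab : G.Adj a b) (ecd : G.Adj c d)
    (cross : ∀ x, (x = a ∨ x = b) → ∀ y, (y = c ∨ y = d) → ¬ G.Adj x y) : False := by
  apply hfree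
  refine ⟨a, b, c, d, I, hab, hbc, hcd, fun i hi => ⟨hbI i hi, hIc i hi⟩, hIcard, eab, ecd, ?_⟩
  intro p q hp hq hadj
  have hsymm := hadj.symm
  rcases hp with rfl | rfl | rfl | rfl | hpI
  · rcases hq with rfl | rfl | rfl | rfl | hqI
    · exact absurd hadj (G.loopless.irrefl _)
    · tauto
    · exact absurd hadj (cross _ (Or.inl rfl) _ (Or.inl rfl))
    · exact absurd hadj (cross _ (Or.inl rfl) _ (Or.inr rfl))
    · exact absurd hsymm (hIsep _ hqI _ (Or.inl rfl))
  · rcases hq with rfl | rfl | rfl | rfl | hqI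
    · tauto
    · exact absurd hadj (G.loopless.irrefl _)
    · exact absurd hadj (cross _ (Or.inr rfl) _ (Or.inl rfl))
    · exact absurd hadj (cross _ (Or.inr rfl) _ (Or.inr rfl))
    · exact absurd hsymm (hIsep _ hqI _ (Or.inr (Or.inl rfl)))
  · rcases hq with rfl | rfl | rfl | rfl | hqI
    · exact absurd hsymm (cross _ (Or.inl rfl) _ (Or.inl rfl))
    · exact absurd hsymm (cross _ (Or.inr rfl) _ (Or.inl rfl))
    · exact absurd hadj (G.loopless.irrefl _)
    · tauto
    · exact absurd hsymm (hIsep _ hqI _ (Or.inr (Or.inr (Or.inl rfl))))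
  · rcases hq with rfl | rfl | rfl | rfl | hqI
    · exact absurd hsymm (cross _ (Or.inl rfl) _ (Or.inr rfl))
    · exact absurd hsymm (cross _ (Or.inr rfl) _ (Or.inr rfl))
    · tauto
    · exact absurd hadj (G.loopless.irrefl _)
    · exact absurd hsymm (hIsep _ hqI _ (Or.inr (Or.inr (Or.inr rfl))))
  · rcases hq with rfl | rfl | rfl | rfl | hqI
    · exact absurd hadj (hIsep _ hpI _ (Or.inl rfl))
    · exact absurd hadj (hIsep _ hpI _ (Or.inr (Or.inl rfl)))
    · exact absurd hadj (hIsep _ hpI _ (Or.inr (Or.inr (Or.inl rfl))))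
    · exact absurd hadj (hIsep _ hpI _ (Or.inr (Or.inr (Or.inr rfl))))
    · exact absurd hadj (hIindep _ hpI _ hqI)

/-- In an ordered graph with no induced copy of the pattern `aakbb`
(vertices `a ≺ b ≺ c ≺ d` with a `k`-element independent middle set `I`, `b ≺ I ≺ c`,
edges `ab, cd` and no other adjacency), given `L ≺ I₀ ≺ R` with `I₀` an independent
`k`-set with no edges to `L ∪ R`: for any edge `uv` inside `L` the set `R ∖ N[{u,v}]` is
independent, and symmetrically for an edge inside `R`. -/
theorem stmt_6 {V : Type*} [Fintype V] [LinearOrder V] (G : SimpleGraph V)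
    (k : ℕ) (hk : 1 ≤ k)
    (hfree : ¬ ∃ (a b c d : V) (I : Finset V),
      a < b ∧ b < c ∧ c < d ∧ (∀ i ∈ I, b < i ∧ i < c) ∧ I.card = k ∧
      G.Adj a b ∧ G.Adj c d ∧
      (∀ p q : V, (p = a ∨ p = b ∨ p = c ∨ p = d ∨ p ∈ I) →
        (q = a ∨ q = b ∨ q = c ∨ q = d ∨ q ∈ I) →
        G.Adj p q →
        ((p = a ∧ q = b) ∨ (p = b ∧ q = a) ∨ (p = c ∧ q = d) ∨ (p = d ∧ q = c))))
    (L I₀ R : Set V)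
    (hLI : ∀ l ∈ L, ∀ i ∈ I₀, l < i)
    (hIR : ∀ i ∈ I₀, ∀ r ∈ R, i < r)
    (hI₀card : I₀.ncard = k)
    (hI₀indep : ∀ i ∈ I₀, ∀ j ∈ I₀, ¬ G.Adj i j)
    (hI₀sep : ∀ i ∈ I₀, ∀ w ∈ L ∪ R, ¬ G.Adj i w) :
    (∀ u ∈ L, ∀ v ∈ L, G.Adj u v →
      ∀ p ∈ R, ∀ q ∈ R,
        ¬ (p = u ∨ p = v ∨ G.Adj u p ∨ G.Adj v p) →
        ¬ (q = u ∨ q = v ∨ G.Adj u q ∨ G.Adj v q) →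
        ¬ G.Adj p q) ∧
    (∀ u ∈ R, ∀ v ∈ R, G.Adj u v →
      ∀ p ∈ L, ∀ q ∈ L,
        ¬ (p = u ∨ p = v ∨ G.Adj u p ∨ G.Adj v p) →
        ¬ (q = u ∨ q = v ∨ G.Adj u q ∨ G.Adj v q) →
        ¬ G.Adj p q) := by

  -- set up the finset version of I₀
  have hfin : I₀.Finite := Set.toFinite _
  set I := hfin.toFinset with hIdef
  have hmem : ∀ x, x ∈ I ↔ x ∈ I₀ := fun x => hfin.mem_toFinset
  have hIcard : I.card = k := by
    rw [← hI₀card, Set.ncard_eq_toFinset_card _ hfin]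
  have hIindep : ∀ i ∈ I, ∀ j ∈ I, ¬ G.Adj i j := fun i hi j hj =>
    hI₀indep i ((hmem i).1 hi) j ((hmem j).1 hj)
  -- I₀ is nonempty
  have hne : I₀.Nonempty := by
    rw [← Set.ncard_pos hfin]; omega
  obtain ⟨i₀, hi₀⟩ := hne
  have hLR : ∀ l ∈ L, ∀ r ∈ R, l < r := fun l hl r hr =>
    lt_trans (hLI l hl i₀ hi₀) (hIR i₀ hi₀ r hr)
  constructor
  · intro u hu v hv huv p hp q hq hpc hqc hadj
    push_neg at hpc hqc
    obtain ⟨hpu, hpv, hup, hvp⟩ := hpc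
    obtain ⟨hqu, hqv, huq, hvq⟩ := hqc
    have hbI : ∀ x ∈ L, ∀ i ∈ I, x < i := fun x hx i hi => hLI x hx i ((hmem i).1 hi)
    have hIc : ∀ x ∈ R, ∀ i ∈ I, i < x := fun x hx i hi => hIR i ((hmem i).1 hi) x hx
    have hpq : p ≠ q := hadj.ne
    have huvne : u ≠ v := huv.ne
    have hcross : ∀ x, (x = u ∨ x = v) → ∀ y, (y = p ∨ y = q) → ¬ G.Adj x y := by
      rintro x (rfl|rfl) y (rfl|rfl) <;> assumption
    have hsep : ∀ i ∈ I, ∀ w, (w ∈ L ∨ w ∈ R) → ¬ G.Adj i w := fun i hi w hw =>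
      hI₀sep i ((hmem i).1 hi) w (by rcases hw with h|h; exact Or.inl h; exact Or.inr h)
    rcases lt_or_gt_of_ne huvne with h1 | h1 <;> rcases lt_or_gt_of_ne hpq with h2 | h2
    · exact stmt6_aux G k hfree I hIcard hIindep u v p q h1 (hLR v hv p hp) h2
        (hbI v hv) (hIc p hp)
        (by rintro i hi w (rfl|rfl|rfl|rfl)
            exacts [hsep i hi _ (Or.inl hu), hsep i hi _ (Or.inl hv),
              hsep i hi _ (Or.inr hp), hsep i hi _ (Or.inr hq)])
        huv hadj
        (by rintro x hx y hy; exact hcross x hx y hy)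
    · exact stmt6_aux G k hfree I hIcard hIindep u v q p h1 (hLR v hv q hq) h2
        (hbI v hv) (hIc q hq)
        (by rintro i hi w (rfl|rfl|rfl|rfl)
            exacts [hsep i hi _ (Or.inl hu), hsep i hi _ (Or.inl hv),
              hsep i hi _ (Or.inr hq), hsep i hi _ (Or.inr hp)])
        huv hadj.symm
        (by rintro x hx y (rfl|rfl); exact hcross x hx _ (Or.inr rfl); exact hcross x hx _ (Or.inl rfl))
    · exact stmt6_aux G k hfree I hIcard hIindep v u p q h1 (hLR u hu p hp) h2
        (hbI u hu) (hIc p hp)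
        (by rintro i hi w (rfl|rfl|rfl|rfl)
            exacts [hsep i hi _ (Or.inl hv), hsep i hi _ (Or.inl hu),
              hsep i hi _ (Or.inr hp), hsep i hi _ (Or.inr hq)])
        huv.symm hadj
        (by rintro x (rfl|rfl) y hy; exact hcross _ (Or.inr rfl) y hy; exact hcross _ (Or.inl rfl) y hy)
    · exact stmt6_aux G k hfree I hIcard hIindep v u q p h1 (hLR u hu q hq) h2
        (hbI u hu) (hIc q hq)
        (by rintro i hi w (rfl|rfl|rfl|rfl)
            exacts [hsep i hi _ (Or.inl hv), hsep i hi _ (Or.inl hu),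
              hsep i hi _ (Or.inr hq), hsep i hi _ (Or.inr hp)])
        huv.symm hadj.symm
        (by rintro x (rfl|rfl) y (rfl|rfl)
            exacts [hcross _ (Or.inr rfl) _ (Or.inr rfl), hcross _ (Or.inr rfl) _ (Or.inl rfl),
              hcross _ (Or.inl rfl) _ (Or.inr rfl), hcross _ (Or.inl rfl) _ (Or.inl rfl)])
  · intro u hu v hv huv p hp q hq hpc hqc hadj
    push_neg at hpc hqc
    obtain ⟨hpu, hpv, hup, hvp⟩ := hpc
    obtain ⟨hqu, hqv, huq, hvq⟩ := hqc
    have hbI : ∀ x ∈ L, ∀ i ∈ I, x < i := fun x hx i hi => hLI x hx i ((hmem i).1 hi)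
    have hIc : ∀ x ∈ R, ∀ i ∈ I, i < x := fun x hx i hi => hIR i ((hmem i).1 hi) x hx
    have hpq : p ≠ q := hadj.ne
    have huvne : u ≠ v := huv.ne
    have hcross : ∀ x, (x = p ∨ x = q) → ∀ y, (y = u ∨ y = v) → ¬ G.Adj x y := by
      rintro x (rfl|rfl) y (rfl|rfl) <;> intro h
      exacts [hup h.symm, hvp h.symm, huq h.symm, hvq h.symm]
    have hsep : ∀ i ∈ I, ∀ w, (w ∈ L ∨ w ∈ R) → ¬ G.Adj i w := fun i hi w hw =>
      hI₀sep i ((hmem i).1 hi) w (by rcases hw with h|h; exact Or.inl h; exact Or.inr h)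
    rcases lt_or_gt_of_ne hpq with h1 | h1 <;> rcases lt_or_gt_of_ne huvne with h2 | h2
    · exact stmt6_aux G k hfree I hIcard hIindep p q u v h1 (hLR q hq u hu) h2
        (hbI q hq) (hIc u hu)
        (by rintro i hi w (rfl|rfl|rfl|rfl)
            exacts [hsep i hi _ (Or.inl hp), hsep i hi _ (Or.inl hq),
              hsep i hi _ (Or.inr hu), hsep i hi _ (Or.inr hv)])
        hadj huv
        (by rintro x hx y hy; exact hcross x hx y hy)
    · exact stmt6_aux G k hfree I hIcard hIindep p q v u h1 (hLR q hq v hv) h2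
        (hbI q hq) (hIc v hv)
        (by rintro i hi w (rfl|rfl|rfl|rfl)
            exacts [hsep i hi _ (Or.inl hp), hsep i hi _ (Or.inl hq),
              hsep i hi _ (Or.inr hv), hsep i hi _ (Or.inr hu)])
        hadj huv.symm
        (by rintro x hx y (rfl|rfl); exact hcross x hx _ (Or.inr rfl); exact hcross x hx _ (Or.inl rfl))
    · exact stmt6_aux G k hfree I hIcard hIindep q p u v h1 (hLR p hp u hu) h2
        (hbI p hp) (hIc u hu)
        (by rintro i hi w (rfl|rfl|rfl|rfl)
            exacts [hsep i hi _ (Or.inl hq), hsep i hi _ (Or.inl hp),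
              hsep i hi _ (Or.inr hu), hsep i hi _ (Or.inr hv)])
        hadj.symm huv
        (by rintro x (rfl|rfl) y hy; exact hcross _ (Or.inr rfl) y hy; exact hcross _ (Or.inl rfl) y hy)
    · exact stmt6_aux G k hfree I hIcard hIindep q p v u h1 (hLR p hp v hv) h2
        (hbI p hp) (hIc v hv)
        (by rintro i hi w (rfl|rfl|rfl|rfl)
            exacts [hsep i hi _ (Or.inl hq), hsep i hi _ (Or.inl hp),
              hsep i hi _ (Or.inr hv), hsep i hi _ (Or.inr hu)])
        hadj.symm huv.symm
        (by rintro x (rfl|rfl) y (rfl|rfl)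
            exacts [hcross _ (Or.inr rfl) _ (Or.inr rfl), hcross _ (Or.inr rfl) _ (Or.inl rfl),
              hcross _ (Or.inl rfl) _ (Or.inr rfl), hcross _ (Or.inl rfl) _ (Or.inl rfl)])
end

section
/- Let k ≥ 0 and let G be an ordered graph containing no configuration of the following form: vertices x ≺ u ≺ v ≺ y, a k-element vertex set F with x ≺ F ≺ u, and a k-element vertex set L with v ≺ L ≺ y, such that xy ∈ E(G), uv ∈ E(G), and no other pair of vertices among {x, u, v, y} ∪ F ∪ L is adjacent. Let x ≺ y be vertices with xy ∈ E(G), and let F and L be k-element vertex sets with x ≺ F ≺ L ≺ y such that F ∪ L is an independent set and no vertex of F ∪ L is adjacent to x or to y. Then the set S = {w ∈ V(G) : x ≺ w ≺ y, F ≺ w ≺ L, and w ∉ N[{x, y} ∪ F ∪ L]} is an independent set. -/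
set_option maxHeartbeats 1000000


/-- In an ordered graph with no configuration `x ≺ F ≺ u ≺ v ≺ L ≺ y`
(`F`, `L` of size `k`, edges `xy, uv`, no other adjacency among the configuration),
given an edge `xy`, `k`-sets `F`, `L` with `x ≺ F ≺ L ≺ y`, `F ∪ L` independent and
nonadjacent to `x` and `y`, the set of vertices strictly between `F` and `L`
(and between `x` and `y`) avoiding `N[{x,y} ∪ F ∪ L]` is independent. -/
theorem stmt_7 {V : Type*} [Fintype V] [LinearOrder V] (G : SimpleGraph V) (k : ℕ)
    (hfree : ¬ ∃ (x u v y : V) (F L : Finset V),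
      x < u ∧ u < v ∧ v < y ∧
      (∀ f ∈ F, x < f ∧ f < u) ∧ F.card = k ∧
      (∀ l ∈ L, v < l ∧ l < y) ∧ L.card = k ∧
      G.Adj x y ∧ G.Adj u v ∧
      (∀ p q : V, (p = x ∨ p = u ∨ p = v ∨ p = y ∨ p ∈ F ∨ p ∈ L) →
        (q = x ∨ q = u ∨ q = v ∨ q = y ∨ q ∈ F ∨ q ∈ L) →
        G.Adj p q →
        ((p = x ∧ q = y) ∨ (p = y ∧ q = x) ∨ (p = u ∧ q = v) ∨ (p = v ∧ q = u))))
    (x y : V) (hxy : x < y) (hadj : G.Adj x y)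
    (F L : Finset V) (hFcard : F.card = k) (hLcard : L.card = k)
    (hxF : ∀ f ∈ F, x < f) (hFL : ∀ f ∈ F, ∀ l ∈ L, f < l) (hLy : ∀ l ∈ L, l < y)
    (hindep : ∀ p ∈ F ∪ L, ∀ q ∈ F ∪ L, ¬ G.Adj p q)
    (hnadjx : ∀ p ∈ F ∪ L, ¬ G.Adj p x) (hnadjy : ∀ p ∈ F ∪ L, ¬ G.Adj p y) :
    ∀ w₁ w₂ : V,
      (x < w₁ ∧ w₁ < y ∧ (∀ f ∈ F, f < w₁) ∧ (∀ l ∈ L, w₁ < l) ∧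
        ¬ (w₁ = x ∨ w₁ = y ∨ G.Adj x w₁ ∨ G.Adj y w₁ ∨
            ∃ p ∈ F ∪ L, p = w₁ ∨ G.Adj p w₁)) →
      (x < w₂ ∧ w₂ < y ∧ (∀ f ∈ F, f < w₂) ∧ (∀ l ∈ L, w₂ < l) ∧
        ¬ (w₂ = x ∨ w₂ = y ∨ G.Adj x w₂ ∨ G.Adj y w₂ ∨
            ∃ p ∈ F ∪ L, p = w₂ ∨ G.Adj p w₂)) →
      ¬ G.Adj w₁ w₂ := by
  have key : ∀ w₁ w₂ : V,
      (x < w₁ ∧ w₁ < y ∧ (∀ f ∈ F, f < w₁) ∧ (∀ l ∈ L, w₁ < l) ∧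
        ¬ (w₁ = x ∨ w₁ = y ∨ G.Adj x w₁ ∨ G.Adj y w₁ ∨
            ∃ p ∈ F ∪ L, p = w₁ ∨ G.Adj p w₁)) →
      (x < w₂ ∧ w₂ < y ∧ (∀ f ∈ F, f < w₂) ∧ (∀ l ∈ L, w₂ < l) ∧
        ¬ (w₂ = x ∨ w₂ = y ∨ G.Adj x w₂ ∨ G.Adj y w₂ ∨
            ∃ p ∈ F ∪ L, p = w₂ ∨ G.Adj p w₂)) →
      w₁ < w₂ → ¬ G.Adj w₁ w₂ := by
    rintro w₁ w₂ ⟨hxw1, hw1y, hFw1, hw1L, hn1⟩ ⟨hxw2, hw2y, hFw2, hw2L, hn2⟩ hlt hadj12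
    push_neg at hn1 hn2
    obtain ⟨h1x, h1y, h1ax, h1ay, h1FL⟩ := hn1
    obtain ⟨h2x, h2y, h2ax, h2ay, h2FL⟩ := hn2
    apply hfree
    refine ⟨x, w₁, w₂, y, F, L, hxw1, hlt, hw2y,
      fun f hf => ⟨hxF f hf, hFw1 f hf⟩, hFcard,
      fun l hl => ⟨hw2L l hl, hLy l hl⟩, hLcard, hadj, hadj12, ?_⟩
    intro p q hp hq hpq
    rcases hp with rfl | rfl | rfl | rfl | hp | hp <;>
      rcases hq with rfl | rfl | rfl | rfl | hq | hq <;>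
      first
      | exact (G.loopless.irrefl _ hpq).elim
      | exact Or.inl ⟨rfl, rfl⟩
      | exact Or.inr (Or.inl ⟨rfl, rfl⟩)
      | exact Or.inr (Or.inr (Or.inl ⟨rfl, rfl⟩))
      | exact Or.inr (Or.inr (Or.inr ⟨rfl, rfl⟩))
      | exact (h1ax hpq).elim | exact (h1ax hpq.symm).elim
      | exact (h1ay hpq).elim | exact (h1ay hpq.symm).elim
      | exact (h2ax hpq).elim | exact (h2ax hpq.symm).elim
      | exact (h2ay hpq).elim | exact (h2ay hpq.symm).elim
      | exact ((h1FL _ (Finset.mem_union_left _ hp)).2 hpq).elim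
      | exact ((h1FL _ (Finset.mem_union_left _ hq)).2 hpq.symm).elim
      | exact ((h1FL _ (Finset.mem_union_right _ hp)).2 hpq).elim
      | exact ((h1FL _ (Finset.mem_union_right _ hq)).2 hpq.symm).elim
      | exact ((h2FL _ (Finset.mem_union_left _ hp)).2 hpq).elim
      | exact ((h2FL _ (Finset.mem_union_left _ hq)).2 hpq.symm).elim
      | exact ((h2FL _ (Finset.mem_union_right _ hp)).2 hpq).elim
      | exact ((h2FL _ (Finset.mem_union_right _ hq)).2 hpq.symm).elim
      | exact (hnadjx _ (Finset.mem_union_left _ hp) hpq).elim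
      | exact (hnadjx _ (Finset.mem_union_left _ hq) hpq.symm).elim
      | exact (hnadjx _ (Finset.mem_union_right _ hp) hpq).elim
      | exact (hnadjx _ (Finset.mem_union_right _ hq) hpq.symm).elim
      | exact (hnadjy _ (Finset.mem_union_left _ hp) hpq).elim
      | exact (hnadjy _ (Finset.mem_union_left _ hq) hpq.symm).elim
      | exact (hnadjy _ (Finset.mem_union_right _ hp) hpq).elim
      | exact (hnadjy _ (Finset.mem_union_right _ hq) hpq.symm).elim
      | exact (hindep _ (Finset.mem_union_left _ hp) _ (Finset.mem_union_left _ hq) hpq).elim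
      | exact (hindep _ (Finset.mem_union_left _ hp) _ (Finset.mem_union_right _ hq) hpq).elim
      | exact (hindep _ (Finset.mem_union_right _ hp) _ (Finset.mem_union_left _ hq) hpq).elim
      | exact (hindep _ (Finset.mem_union_right _ hp) _ (Finset.mem_union_right _ hq) hpq).elim
  intro w₁ w₂ h1 h2 hadj12
  rcases lt_trichotomy w₁ w₂ with h | h | h
  · exact key w₁ w₂ h1 h2 h hadj12
  · exact G.loopless.irrefl w₁ (h ▸ hadj12)
  · exact key w₂ w₁ h2 h1 h hadj12.symm
end

section
/- Let G be a finite connected ordered graph with at least two vertices. Then there exist an integer t ≥ 1, vertices x₁, …, x_t and y₁, …, y_t, and vertex sets Z₁, …, Z_t such that: (P1) for each i ∈ [t], the set Z₁ ∪ … ∪ Z_i is a prefix of the order, i.e., if v ∈ Z₁ ∪ … ∪ Z_i and u ⪯ v then u ∈ Z₁ ∪ … ∪ Z_i; (P2) for each i ∈ [t], x_i y_i ∈ E(G); (P3) for each i ∈ [t], x_i ⪯ z ⪯ y_i for every z ∈ Z_i, and y_i ∈ Z_i; (P4) for each i ∈ [t], every edge uv of G with u ∈ Z₁ ∪ … ∪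 Z_i and v ∉ Z₁ ∪ … ∪ Z_i satisfies u ∈ Z_i; (P5) the sets Z₁, …, Z_t are pairwise disjoint and their union is V(G). -/
section Aux

variable {V : Type*} [Fintype V] [LinearOrder V]

noncomputable def sIdx (v : V) : ℕ := ((monoEquivOfFin V rfl).symm v : ℕ)

lemma sIdx_lt (v : V) : sIdx v < Fintype.card V := ((monoEquivOfFin V rfl).symm v).isLt

lemma sIdx_le_iff {u v : V} : sIdx u ≤ sIdx v ↔ u ≤ v :=
  Iff.trans (Iff.symm Fin.le_def) (monoEquivOfFin V rfl).symm.le_iff_le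

lemma sIdx_surj {k : ℕ} (hk : k < Fintype.card V) : ∃ v : V, sIdx v = k :=
  ⟨monoEquivOfFin V rfl ⟨k, hk⟩, by simp [sIdx]⟩

lemma step_lemma {G : SimpleGraph V} (hconn : G.Connected)
    (hcard : 2 ≤ Fintype.card V) (k : ℕ) (hk : k < Fintype.card V) :
    ∃ k' x y, k < k' ∧ k' ≤ Fintype.card V ∧
      (∀ u w, G.Adj u w → sIdx u ≤ k → k' ≤ sIdx w → False) ∧
      sIdx x ≤ k ∧ G.Adj x y ∧ sIdx y + 1 = k' := by
  classical
  obtain ⟨vk, hvk⟩ := sIdx_surj hk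
  by_cases hA : k + 1 < Fintype.card V
  · obtain ⟨w0, hw0⟩ := sIdx_surj hA
    obtain ⟨p⟩ := hconn.preconnected vk w0
    obtain ⟨d, -, hd1, hd2⟩ := p.exists_boundary_dart {v | sIdx v ≤ k}
      (by simp [hvk]) (by simp [hw0])
    set F : Finset V := Finset.univ.filter
      (fun w => k < sIdx w ∧ ∃ u, sIdx u ≤ k ∧ G.Adj u w) with hF
    have hFne : F.Nonempty :=
      ⟨d.snd, Finset.mem_filter.mpr ⟨Finset.mem_univ _, lt_of_not_ge hd2, d.fst, hd1, d.adj⟩⟩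
    obtain ⟨-, hky, x, hx, hadj⟩ := Finset.mem_filter.mp (F.max'_mem hFne)
    refine ⟨sIdx (F.max' hFne) + 1, x, F.max' hFne, by omega, sIdx_lt _, ?_, hx, hadj, rfl⟩
    intro u w huw hu hw
    have hwF : w ∈ F :=
      Finset.mem_filter.mpr ⟨Finset.mem_univ w, by omega, u, hu, huw⟩
    have h1 := Finset.le_max' F w hwF
    have h2 := sIdx_le_iff.mpr h1
    omega
  · have hkn : k + 1 = Fintype.card V := by omega
    obtain ⟨w0, hw0⟩ := Fintype.exists_ne_of_one_lt_card (by omega) vk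
    obtain ⟨p⟩ := hconn.preconnected vk w0
    obtain ⟨d, -, hd1, hd2⟩ := p.exists_boundary_dart {vk} rfl hw0
    have hd1' : d.fst = vk := hd1
    have hadj : G.Adj d.snd vk := by
      have := d.adj; rw [hd1'] at this; exact this.symm
    refine ⟨k + 1, d.snd, vk, Nat.lt_succ_self k, hkn.le, ?_, ?_, hadj, by omega⟩
    · intro u w _ _ hw
      have := sIdx_lt w; omega
    · have := sIdx_lt d.snd; omega

end Aux

/-- Every finite connected ordered graph on at least two vertices admits a
partition of its vertex set into consecutive segments `Z₁, …, Z_t` with spanning edges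
`x_i y_i` satisfying properties (P1)–(P5). -/
theorem stmt_8 {V : Type*} [Fintype V] [LinearOrder V] (G : SimpleGraph V)
    (hconn : G.Connected) (hcard : 2 ≤ Fintype.card V) :
    ∃ t : ℕ, 1 ≤ t ∧
      ∃ (x y : Fin t → V) (Z : Fin t → Set V),
        -- (P1): each Z₁ ∪ … ∪ Z_i is a prefix of the order
        (∀ i : Fin t, ∀ v : V, (∃ j ≤ i, v ∈ Z j) → ∀ u : V, u ≤ v → ∃ j ≤ i, u ∈ Z j) ∧
        -- (P2)
        (∀ i : Fin t, G.Adj (x i) (y i)) ∧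
        -- (P3)
        (∀ i : Fin t, (∀ z ∈ Z i, x i ≤ z ∧ z ≤ y i) ∧ y i ∈ Z i) ∧
        -- (P4)
        (∀ i : Fin t, ∀ u v : V, G.Adj u v → (∃ j ≤ i, u ∈ Z j) →
          ¬ (∃ j ≤ i, v ∈ Z j) → u ∈ Z i) ∧
        -- (P5)
        (∀ i j : Fin t, i ≠ j → Disjoint (Z i) (Z j)) ∧ (⋃ i : Fin t, Z i) = Set.univ := by
  classical
  choose K X Y hlt hle hnoedge hxle hadj hyidx using step_lemma hconn hcard
  let g : ℕ → ℕ := fun i => Nat.rec (motive := fun _ => ℕ) 0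
    (fun _ prev => if h : prev < Fintype.card V then K prev h else prev) i
  have hg0 : g 0 = 0 := rfl
  have hgsucc : ∀ i, g (i + 1) =
      if h : g i < Fintype.card V then K (g i) h else g i := fun _ => rfl
  have hgle : ∀ i, g i ≤ Fintype.card V := by
    intro i
    induction i with
    | zero => exact Nat.zero_le _
    | succ i ih =>
      rw [hgsucc]
      split
      · exact hle _ _
      · exact ih
  have hgstep : ∀ i, g i ≤ g (i + 1) := by
    intro i
    rw [hgsucc]
    split
    · exact (hlt _ _).le
    · exact le_rfl
  have hgmono : Monotone g := monotone_nat_of_le_succ hgstep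
  have hexists : ∃ i, g i = Fintype.card V := by
    have key : ∀ i, g i = Fintype.card V ∨ i ≤ g i := by
      intro i
      induction i with
      | zero => exact Or.inr (Nat.zero_le _)
      | succ i ih =>
        rcases ih with h | h
        · left; rw [hgsucc, dif_neg (by omega)]; exact h
        · by_cases h' : g i < Fintype.card V
          · right
            rw [hgsucc, dif_pos h']
            have := hlt (g i) h'
            omega
          · left
            have := hgle i
            have hgin : g i = Fintype.card V := by omega
            rw [hgsucc, dif_neg h']; exact hgin
    rcases key (Fintype.card V) with h | h
    · exact ⟨_, h⟩
    · exact ⟨_, le_antisymm (hgle _) h⟩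
  set t := Nat.find hexists with htdef
  have hgt : g t = Fintype.card V := Nat.find_spec hexists
  have htpos : 1 ≤ t := by
    rcases Nat.eq_zero_or_pos t with h | h
    · exfalso; rw [h, hg0] at hgt; omega
    · exact h
  have hglt : ∀ i : ℕ, i < t → g i < Fintype.card V := by
    intro i hi
    exact lt_of_le_of_ne (hgle i) (Nat.find_min hexists hi)
  have hK : ∀ i : ℕ, ∀ h : i < t, g (i + 1) = K (g i) (hglt i h) := by
    intro i h
    rw [hgsucc, dif_pos (hglt i h)]
  set Z : Fin t → Set V := fun i => {v | g i ≤ sIdx v ∧ sIdx v < g ((i : ℕ) + 1)} with hZ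
  have hZmem : ∀ (i : Fin t) (v : V),
      v ∈ Z i ↔ g i ≤ sIdx v ∧ sIdx v < g ((i : ℕ) + 1) := fun i v => Iff.rfl
  have hkey : ∀ m : ℕ, ∀ hm : m < t, ∀ v : V, sIdx v < g (m + 1) →
      ∃ j : Fin t, j ≤ ⟨m, hm⟩ ∧ v ∈ Z j := by
    intro m
    induction m with
    | zero =>
      intro hm v hv
      exact ⟨⟨0, hm⟩, le_refl _, (hZmem ⟨0, hm⟩ v).mpr ⟨Nat.zero_le _, hv⟩⟩
    | succ m ih =>
      intro hm v hv
      by_cases h : g (m + 1) ≤ sIdx v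
      · exact ⟨⟨m + 1, hm⟩, le_refl _, (hZmem ⟨m + 1, hm⟩ v).mpr ⟨h, hv⟩⟩
      · obtain ⟨j, hj, hvj⟩ := ih (by omega) v (lt_of_not_ge h)
        refine ⟨j, ?_, hvj⟩
        have hj' := Fin.le_def.mp hj
        exact Fin.le_def.mpr (le_trans hj' (Nat.le_succ m))
  have hpre : ∀ (i : Fin t) (v : V), (∃ j ≤ i, v ∈ Z j) ↔ sIdx v < g ((i : ℕ) + 1) := by
    intro i v
    constructor
    · rintro ⟨j, hj, hv⟩
      obtain ⟨-, hv2⟩ := (hZmem j v).mp hv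
      have hji : (j : ℕ) + 1 ≤ (i : ℕ) + 1 := by
        have := Fin.le_def.mp hj; omega
      exact lt_of_lt_of_le hv2 (hgmono hji)
    · intro hv
      obtain ⟨j, hj, hvj⟩ := hkey (i : ℕ) i.isLt v hv
      refine ⟨j, ?_, hvj⟩
      have hj' := Fin.le_def.mp hj
      exact Fin.le_def.mpr hj'
  refine ⟨t, htpos, fun i => X (g i) (hglt i i.isLt), fun i => Y (g i) (hglt i i.isLt),
    Z, ?_, ?_, ?_, ?_, ?_, ?_⟩
  · -- (P1)
    intro i v hv u huv
    rw [hpre] at hv ⊢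
    exact lt_of_le_of_lt (sIdx_le_iff.mpr huv) hv
  · -- (P2)
    intro i
    exact hadj _ _
  · -- (P3)
    intro i
    beta_reduce
    have hKi := hK (i : ℕ) i.isLt
    have hyi := hyidx (g (i : ℕ)) (hglt (i : ℕ) i.isLt)
    have hlti := hlt (g (i : ℕ)) (hglt (i : ℕ) i.isLt)
    constructor
    · intro z hz
      obtain ⟨hz1, hz2⟩ := (hZmem i z).mp hz
      constructor
      · exact sIdx_le_iff.mp (le_trans (hxle _ _) hz1)
      · exact sIdx_le_iff.mp (by omega)
    · exact (hZmem i _).mpr ⟨by omega, by omega⟩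
  · -- (P4)
    intro i u v huv hu hv
    rw [hpre] at hu
    have hv' : g ((i : ℕ) + 1) ≤ sIdx v := not_lt.mp (fun h => hv ((hpre i v).mpr h))
    refine (hZmem i u).mpr ⟨?_, hu⟩
    by_contra h
    push_neg at h
    apply hnoedge (g (i : ℕ)) (hglt (i : ℕ) i.isLt) u v huv (le_of_lt h)
    rw [← hK (i : ℕ) i.isLt]
    exact hv'
  · -- (P5) disjointness
    have hd : ∀ i j : Fin t, (i : ℕ) < (j : ℕ) → Disjoint (Z i) (Z j) := by
      intro i j hij
      rw [Set.disjoint_left]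
      intro v hvi hvj
      obtain ⟨-, hv2⟩ := (hZmem i v).mp hvi
      obtain ⟨hv3, -⟩ := (hZmem j v).mp hvj
      have : g ((i : ℕ) + 1) ≤ g (j : ℕ) := hgmono hij
      omega
    intro i j hij
    rcases hij.lt_or_gt with h | h
    · exact hd i j (Fin.lt_def.mp h)
    · exact (hd j i (Fin.lt_def.mp h)).symm
  · -- (P5) union
    apply Set.eq_univ_of_forall
    intro v
    have hv : sIdx v < g t := by rw [hgt]; exact sIdx_lt v
    have ht1 : t - 1 < t := by omega
    have heq : t - 1 + 1 = t := by omega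
    obtain ⟨j, -, hvj⟩ := hkey (t - 1) ht1 v (by rw [heq]; exact hv)
    exact Set.mem_iUnion.mpr ⟨j, hvj⟩
end

section
/- Let G be a finite simple graph and let uv ∈ E(G). Let G' be the graph on vertex set V(G) ∪ {p, q}, where p and q are two new vertices, whose adjacency is defined as follows: for a, b ∈ V(G), a and b are adjacent in G' if and only if they are adjacent in G and {a, b} ≠ {u, v}; moreover u is adjacent to p, p is adjacent to q, q is adjacent to v, and p, q have no other neighbors. Then α(G') = α(G) + 1. -/
noncomputable def indepNum {V : Type*} (G : SimpleGraph V) : ℕ :=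
  sSup {n | ∃ s : Finset V, (∀ a ∈ s, ∀ b ∈ s, ¬ G.Adj a b) ∧ s.card = n}

lemma indep_bdd {V : Type*} [Fintype V] (G : SimpleGraph V) :
    BddAbove {n | ∃ s : Finset V, (∀ a ∈ s, ∀ b ∈ s, ¬ G.Adj a b) ∧ s.card = n} := by
  refine ⟨Fintype.card V, fun n hn => ?_⟩
  obtain ⟨s, _, hc⟩ := hn
  exact hc ▸ s.card_le_univ

lemma le_indepNum {V : Type*} [Fintype V] (G : SimpleGraph V) (s : Finset V)
    (h : ∀ a ∈ s, ∀ b ∈ s, ¬ G.Adj a b) : s.card ≤ indepNum G :=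
  le_csSup (indep_bdd G) ⟨s, h, rfl⟩

lemma exists_max_indep {V : Type*} [Fintype V] (G : SimpleGraph V) :
    ∃ s : Finset V, (∀ a ∈ s, ∀ b ∈ s, ¬ G.Adj a b) ∧ s.card = indepNum G := by
  have h0 : (0 : ℕ) ∈ {n | ∃ s : Finset V, (∀ a ∈ s, ∀ b ∈ s, ¬ G.Adj a b) ∧ s.card = n} :=
    ⟨∅, by simp, by simp⟩
  exact Nat.sSup_mem ⟨0, h0⟩ (indep_bdd G)

/-- Subdividing an edge `uv` twice (replacing it by the path `u–p–q–v`,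
with `p = Sum.inr false`, `q = Sum.inr true` two new vertices) increases the
independence number by exactly one. -/
theorem stmt_9 {V : Type*} [Fintype V] [DecidableEq V] (G : SimpleGraph V)
    (u v : V) (huv : G.Adj u v) :
    indepNum (SimpleGraph.fromRel (fun a b : V ⊕ Bool =>
      match a, b with
      | Sum.inl a, Sum.inl b => G.Adj a b ∧ ¬ ((a = u ∧ b = v) ∨ (a = v ∧ b = u))
      | Sum.inl a, Sum.inr c => (a = u ∧ c = false) ∨ (a = v ∧ c = true)
      | Sum.inr c, Sum.inl a => (a = u ∧ c = false) ∨ (a = v ∧ c = true)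
      | Sum.inr c, Sum.inr d => c ≠ d)) = indepNum G + 1 := by
  classical
  set R : V ⊕ Bool → V ⊕ Bool → Prop := (fun a b : V ⊕ Bool =>
      match a, b with
      | Sum.inl a, Sum.inl b => G.Adj a b ∧ ¬ ((a = u ∧ b = v) ∨ (a = v ∧ b = u))
      | Sum.inl a, Sum.inr c => (a = u ∧ c = false) ∨ (a = v ∧ c = true)
      | Sum.inr c, Sum.inl a => (a = u ∧ c = false) ∨ (a = v ∧ c = true)
      | Sum.inr c, Sum.inr d => c ≠ d) with hR
  have adj_ll : ∀ a b : V, (SimpleGraph.fromRel R).Adj (Sum.inl a) (Sum.inl b) ↔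
      (G.Adj a b ∧ ¬ ((a = u ∧ b = v) ∨ (a = v ∧ b = u))) := by
    intro a b
    simp only [SimpleGraph.fromRel_adj, hR]
    constructor
    · rintro ⟨-, h | h⟩
      · exact h
      · exact ⟨h.1.symm, fun hp => h.2 (by tauto)⟩
    · intro h
      exact ⟨by simpa using h.1.ne, Or.inl h⟩
  have adj_lr : ∀ (a : V) (c : Bool), (SimpleGraph.fromRel R).Adj (Sum.inl a) (Sum.inr c) ↔
      ((a = u ∧ c = false) ∨ (a = v ∧ c = true)) := by
    intro a c
    simp only [SimpleGraph.fromRel_adj, hR]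
    simp
  have adj_rr : ∀ c d : Bool, (SimpleGraph.fromRel R).Adj (Sum.inr c) (Sum.inr d) ↔ c ≠ d := by
    intro c d
    simp only [SimpleGraph.fromRel_adj, hR]
    simp [ne_comm]
  apply le_antisymm
  · -- upper bound
    obtain ⟨t, ht, hcard⟩ := exists_max_indep (SimpleGraph.fromRel R)
    rw [← hcard]
    set s0 : Finset V := Finset.univ.filter (fun a => Sum.inl a ∈ t) with hs0
    have hmem : ∀ a : V, a ∈ s0 ↔ Sum.inl a ∈ t := by intro a; simp [hs0]
    have pairlem : ∀ a ∈ s0, ∀ b ∈ s0, G.Adj a b → ((a = u ∧ b = v) ∨ (a = v ∧ b = u)) := by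
      intro a ha b hb hab
      by_contra hp
      exact ht _ ((hmem a).1 ha) _ ((hmem b).1 hb) ((adj_ll a b).2 ⟨hab, hp⟩)
    by_cases hcase : u ∈ s0 ∧ v ∈ s0
    · have hts : t ⊆ s0.image Sum.inl := by
        intro x hx
        obtain a | c := x
        · exact Finset.mem_image_of_mem _ ((hmem a).2 hx)
        · cases c
          · exact absurd ((adj_lr u false).2 (Or.inl ⟨rfl, rfl⟩))
              (ht _ ((hmem u).1 hcase.1) _ hx)
          · exact absurd ((adj_lr v true).2 (Or.inr ⟨rfl, rfl⟩))
              (ht _ ((hmem v).1 hcase.2) _ hx)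
      have h1 : t.card ≤ s0.card := le_trans (Finset.card_le_card hts) Finset.card_image_le
      have herase : ∀ a ∈ s0.erase u, ∀ b ∈ s0.erase u, ¬ G.Adj a b := by
        intro a ha b hb hab
        rcases pairlem a (Finset.mem_of_mem_erase ha) b (Finset.mem_of_mem_erase hb) hab with
          ⟨h, -⟩ | ⟨-, h⟩
        · exact Finset.ne_of_mem_erase ha h
        · exact Finset.ne_of_mem_erase hb h
      have h2 : (s0.erase u).card ≤ indepNum G := le_indepNum G _ herase
      have h3 : s0.card = (s0.erase u).card + 1 := (Finset.card_erase_add_one hcase.1).symm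
      omega
    · have hs0ind : ∀ a ∈ s0, ∀ b ∈ s0, ¬ G.Adj a b := by
        intro a ha b hb hab
        rcases pairlem a ha b hb hab with ⟨hau, hbv⟩ | ⟨hav, hbu⟩
        · exact hcase ⟨hau ▸ ha, hbv ▸ hb⟩
        · exact hcase ⟨hbu ▸ hb, hav ▸ ha⟩
      have h2 : s0.card ≤ indepNum G := le_indepNum G _ hs0ind
      have hnotboth : ¬ (Sum.inr false ∈ t ∧ Sum.inr true ∈ t) := by
        rintro ⟨hf, htt⟩
        exact ht _ hf _ htt ((adj_rr false true).2 (by simp))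
      have key : t.card ≤ s0.card + 1 := by
        by_cases hf : Sum.inr false ∈ t
        · have hts : t ⊆ insert (Sum.inr false) (s0.image Sum.inl) := by
            intro x hx
            obtain a | c := x
            · exact Finset.mem_insert_of_mem (Finset.mem_image_of_mem _ ((hmem a).2 hx))
            · cases c
              · exact Finset.mem_insert_self _ _
              · exact absurd ⟨hf, hx⟩ hnotboth
          calc t.card ≤ _ := Finset.card_le_card hts
            _ ≤ (s0.image Sum.inl).card + 1 := Finset.card_insert_le _ _
            _ ≤ s0.card + 1 := Nat.add_le_add_right Finset.card_image_le 1
        · have hts : t ⊆ insert (Sum.inr true) (s0.image Sum.inl) := by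
            intro x hx
            obtain a | c := x
            · exact Finset.mem_insert_of_mem (Finset.mem_image_of_mem _ ((hmem a).2 hx))
            · cases c
              · exact absurd hx hf
              · exact Finset.mem_insert_self _ _
          calc t.card ≤ _ := Finset.card_le_card hts
            _ ≤ (s0.image Sum.inl).card + 1 := Finset.card_insert_le _ _
            _ ≤ s0.card + 1 := Nat.add_le_add_right Finset.card_image_le 1
      omega
  · -- lower bound
    obtain ⟨s, hs, hcard⟩ := exists_max_indep G
    rw [← hcard]
    by_cases hu : u ∈ s
    · have hv : v ∉ s := fun hv => hs u hu v hv huv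
      have hin : (Sum.inr true : V ⊕ Bool) ∉ s.image Sum.inl := by simp
      have hind : ∀ x ∈ insert (Sum.inr true) (s.image Sum.inl),
          ∀ y ∈ insert (Sum.inr true) (s.image Sum.inl),
          ¬ (SimpleGraph.fromRel R).Adj x y := by
        intro x hx y hy hadj
        simp only [Finset.mem_insert, Finset.mem_image] at hx hy
        rcases hx with rfl | ⟨a, ha, rfl⟩ <;> rcases hy with rfl | ⟨b, hb, rfl⟩
        · exact (SimpleGraph.irrefl _) hadj
        · rcases (adj_lr b true).1 hadj.symm with ⟨-, h⟩ | ⟨h, -⟩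
          · exact Bool.noConfusion h
          · exact hv (h ▸ hb)
        · rcases (adj_lr a true).1 hadj with ⟨-, h⟩ | ⟨h, -⟩
          · exact Bool.noConfusion h
          · exact hv (h ▸ ha)
        · exact hs a ha b hb ((adj_ll a b).1 hadj).1
      have hle := le_indepNum (SimpleGraph.fromRel R) _ hind
      rwa [Finset.card_insert_of_notMem hin,
        Finset.card_image_of_injective _ Sum.inl_injective] at hle
    · have hin : (Sum.inr false : V ⊕ Bool) ∉ s.image Sum.inl := by simp
      have hind : ∀ x ∈ insert (Sum.inr false) (s.image Sum.inl),
          ∀ y ∈ insert (Sum.inr false) (s.image Sum.inl),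
          ¬ (SimpleGraph.fromRel R).Adj x y := by
        intro x hx y hy hadj
        simp only [Finset.mem_insert, Finset.mem_image] at hx hy
        rcases hx with rfl | ⟨a, ha, rfl⟩ <;> rcases hy with rfl | ⟨b, hb, rfl⟩
        · exact (SimpleGraph.irrefl _) hadj
        · rcases (adj_lr b false).1 hadj.symm with ⟨h, -⟩ | ⟨-, h⟩
          · exact hu (h ▸ hb)
          · exact Bool.noConfusion h
        · rcases (adj_lr a false).1 hadj with ⟨h, -⟩ | ⟨-, h⟩
          · exact hu (h ▸ ha)
          · exact Bool.noConfusion h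
        · exact hs a ha b hb ((adj_ll a b).1 hadj).1
      have hle := le_indepNum (SimpleGraph.fromRel R) _ hind
      rwa [Finset.card_insert_of_notMem hin,
        Finset.card_image_of_injective _ Sum.inl_injective] at hle
end

section
/- Let G be a finite simple graph containing seven distinct vertices a, b₁, c, d, e₁, f₁, g such that the edges of G among these seven vertices are exactly a b₁, b₁ c, d e₁, e₁ f₁, f₁ g, and such that in G the neighborhood of b₁ is exactly {a, c}, the neighborhood of e₁ is exactly {d, f₁}, and the neighborhood of f₁ is exactly {e₁, g}. Let G' be the graph obtained from G by adding one new vertex b' adjacent exactly to a, c, b₁, f₁, and adding the edge b₁ e₁. Then α(G') = α(G). -/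
lemma indepNum_le {V : Type*} (G : SimpleGraph V) (m : ℕ)
    (h : ∀ s : Finset V, (∀ a ∈ s, ∀ b ∈ s, ¬ G.Adj a b) → s.card ≤ m) :
    indepNum G ≤ m :=
  csSup_le ⟨0, ⟨∅, by simp, rfl⟩⟩ (fun n hn => by
    obtain ⟨s, hs, hc⟩ := hn; exact hc ▸ h s hs)

/-- Interchangeability gadget. If `G` contains seven distinct vertices
`a, b₁, c, d, e₁, f₁, g` inducing exactly the edges `ab₁, b₁c, de₁, e₁f₁, f₁g`, with
`N(b₁) = {a, c}`, `N(e₁) = {d, f₁}`, `N(f₁) = {e₁, g}`, then adding a new vertex `b'`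
adjacent exactly to `a, c, b₁, f₁` together with the edge `b₁e₁` leaves the independence
number unchanged. -/
theorem stmt_12 {V : Type*} [Fintype V] [DecidableEq V] (G : SimpleGraph V)
    (a b₁ c d e₁ f₁ g : V)
    (hdist : ([a, b₁, c, d, e₁, f₁, g] : List V).Pairwise (· ≠ ·))
    (hexact : ∀ p q : V, p ∈ ({a, b₁, c, d, e₁, f₁, g} : Set V) →
      q ∈ ({a, b₁, c, d, e₁, f₁, g} : Set V) →
      (G.Adj p q ↔ (({p, q} : Set V) = {a, b₁} ∨ ({p, q} : Set V) = {b₁, c} ∨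
        ({p, q} : Set V) = {d, e₁} ∨ ({p, q} : Set V) = {e₁, f₁} ∨
        ({p, q} : Set V) = {f₁, g})))
    (hb : ∀ w : V, G.Adj b₁ w ↔ (w = a ∨ w = c))
    (he : ∀ w : V, G.Adj e₁ w ↔ (w = d ∨ w = f₁))
    (hf : ∀ w : V, G.Adj f₁ w ↔ (w = e₁ ∨ w = g)) :
    indepNum (SimpleGraph.fromRel (fun p q : V ⊕ Unit =>
      match p, q with
      | Sum.inl p, Sum.inl q => G.Adj p q ∨ (p = b₁ ∧ q = e₁) ∨ (p = e₁ ∧ q = b₁)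
      | Sum.inl p, Sum.inr _ => p = a ∨ p = c ∨ p = b₁ ∨ p = f₁
      | Sum.inr _, Sum.inl p => p = a ∨ p = c ∨ p = b₁ ∨ p = f₁
      | Sum.inr _, Sum.inr _ => False)) = indepNum G := by
  set rel : V ⊕ Unit → V ⊕ Unit → Prop := (fun p q : V ⊕ Unit =>
      match p, q with
      | Sum.inl p, Sum.inl q => G.Adj p q ∨ (p = b₁ ∧ q = e₁) ∨ (p = e₁ ∧ q = b₁)
      | Sum.inl p, Sum.inr _ => p = a ∨ p = c ∨ p = b₁ ∨ p = f₁
      | Sum.inr _, Sum.inl p => p = a ∨ p = c ∨ p = b₁ ∨ p = f₁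
      | Sum.inr _, Sum.inr _ => False) with hrel
  have hadj_ll : ∀ x y : V, (SimpleGraph.fromRel rel).Adj (Sum.inl x) (Sum.inl y) ↔
      x ≠ y ∧ (G.Adj x y ∨ (x = b₁ ∧ y = e₁) ∨ (x = e₁ ∧ y = b₁)) := by
    intro x y
    rw [SimpleGraph.fromRel_adj]
    constructor
    · rintro ⟨hne, h | h⟩
      · exact ⟨fun h' => hne (by rw [h']), h⟩
      · refine ⟨fun h' => hne (by rw [h']), ?_⟩
        rcases h with h | h | h
        · exact Or.inl h.symm
        · exact Or.inr (Or.inr ⟨h.2, h.1⟩)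
        · exact Or.inr (Or.inl ⟨h.2, h.1⟩)
    · rintro ⟨hne, h⟩
      exact ⟨fun h' => hne (Sum.inl_injective h'), Or.inl h⟩
  have hadj_rl : ∀ x : V, (SimpleGraph.fromRel rel).Adj (Sum.inr ()) (Sum.inl x) ↔
      (x = a ∨ x = c ∨ x = b₁ ∨ x = f₁) := by
    intro x
    rw [SimpleGraph.fromRel_adj]
    constructor
    · rintro ⟨-, h | h⟩ <;> exact h
    · intro h; exact ⟨by simp, Or.inl h⟩
  apply le_antisymm
  · -- α(G') ≤ α(G)
    apply indepNum_le
    intro s hs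
    set t : Finset V := s.preimage Sum.inl Sum.inl_injective.injOn
      with htdef
    have hmem : ∀ x : V, x ∈ t ↔ Sum.inl x ∈ s := fun x => Finset.mem_preimage
    have ht_indep : ∀ x ∈ t, ∀ y ∈ t, ¬ G.Adj x y := by
      intro x hx y hy hxy
      exact hs _ ((hmem x).1 hx) _ ((hmem y).1 hy)
        ((hadj_ll x y).2 ⟨hxy.ne, Or.inl hxy⟩)
    by_cases hb' : Sum.inr () ∈ s
    · -- b' ∈ s : replace it by b₁
      have hnot : ∀ x : V, (x = a ∨ x = c ∨ x = b₁ ∨ x = f₁) → x ∉ t := by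
        intro x hx hxt
        exact hs _ hb' _ ((hmem x).1 hxt) ((hadj_rl x).2 hx)
      have hb₁t : b₁ ∉ t := hnot b₁ (by tauto)
      have hindep' : ∀ x ∈ insert b₁ t, ∀ y ∈ insert b₁ t, ¬ G.Adj x y := by
        intro x hx y hy hxy
        rcases Finset.mem_insert.1 hx with hxb | hx'
        · subst hxb
          rcases Finset.mem_insert.1 hy with hyb | hy'
          · subst hyb; exact G.irrefl hxy
          · rcases (hb y).1 hxy with hya | hyc
            · subst hya; exact hnot _ (by tauto) hy'
            · subst hyc; exact hnot _ (by tauto) hy'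
        · rcases Finset.mem_insert.1 hy with hyb | hy'
          · subst hyb
            rcases (hb x).1 hxy.symm with hxa | hxc
            · subst hxa; exact hnot _ (by tauto) hx'
            · subst hxc; exact hnot _ (by tauto) hx'
          · exact ht_indep x hx' y hy' hxy
      have hcard : s.card = (insert b₁ t).card := by
        have hseq : s = insert (Sum.inr ()) (t.image Sum.inl) := by
          ext z
          rcases z with x | u
          · simp [hmem, Sum.inl_injective.eq_iff]
          · cases u; simp [hb']
        rw [hseq, Finset.card_insert_of_notMem (by simp),
          Finset.card_image_of_injective _ Sum.inl_injective,
          Finset.card_insert_of_notMem hb₁t]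
      rw [hcard]
      exact le_indepNum G _ hindep'
    · -- b' ∉ s
      have hcard : s.card = t.card := by
        have hseq : s = t.image Sum.inl := by
          ext z
          rcases z with x | u
          · simp [hmem, Sum.inl_injective.eq_iff]
          · cases u; simp [hb']
        rw [hseq, Finset.card_image_of_injective _ Sum.inl_injective]
      rw [hcard]
      exact le_indepNum G t ht_indep
  · -- α(G) ≤ α(G')
    apply indepNum_le
    intro s hs
    by_cases hbe : b₁ ∈ s ∧ e₁ ∈ s
    · -- both b₁ and e₁ in s: swap b₁ for b'
      have hacf : a ∉ s ∧ c ∉ s ∧ f₁ ∉ s := by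
        refine ⟨fun ha => hs b₁ hbe.1 a ha ((hb a).2 (by tauto)),
          fun hc => hs b₁ hbe.1 c hc ((hb c).2 (by tauto)),
          fun hfs => hs e₁ hbe.2 f₁ hfs ((he f₁).2 (by tauto))⟩
      set u : Finset (V ⊕ Unit) := insert (Sum.inr ()) ((s.erase b₁).image Sum.inl)
        with hudef
      have hindep' : ∀ p ∈ u, ∀ q ∈ u, ¬ (SimpleGraph.fromRel rel).Adj p q := by
        intro p hp q hq hpq
        rcases Finset.mem_insert.1 hp with rfl | hp <;>
          rcases Finset.mem_insert.1 hq with rfl | hq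
        · exact (SimpleGraph.irrefl _) hpq
        · obtain ⟨y, hy, rfl⟩ := Finset.mem_image.1 hq
          have := (hadj_rl y).1 hpq
          have hyne := Finset.ne_of_mem_erase hy
          have hys := Finset.mem_of_mem_erase hy
          rcases this with rfl | rfl | rfl | rfl
          · exact hacf.1 hys
          · exact hacf.2.1 hys
          · exact hyne rfl
          · exact hacf.2.2 hys
        · obtain ⟨y, hy, rfl⟩ := Finset.mem_image.1 hp
          have := (hadj_rl y).1 hpq.symm
          have hyne := Finset.ne_of_mem_erase hy
          have hys := Finset.mem_of_mem_erase hy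
          rcases this with rfl | rfl | rfl | rfl
          · exact hacf.1 hys
          · exact hacf.2.1 hys
          · exact hyne rfl
          · exact hacf.2.2 hys
        · obtain ⟨x, hx, rfl⟩ := Finset.mem_image.1 hp
          obtain ⟨y, hy, rfl⟩ := Finset.mem_image.1 hq
          obtain ⟨hne, hG | ⟨rfl, rfl⟩ | ⟨rfl, rfl⟩⟩ := (hadj_ll x y).1 hpq
          · exact hs x (Finset.mem_of_mem_erase hx) y (Finset.mem_of_mem_erase hy) hG
          · exact Finset.ne_of_mem_erase hx rfl
          · exact Finset.ne_of_mem_erase hy rfl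
      have hcard : s.card = u.card := by
        rw [hudef, Finset.card_insert_of_notMem (by simp),
          Finset.card_image_of_injective _ Sum.inl_injective,
          Finset.card_erase_of_mem hbe.1]
        have : 1 ≤ s.card := Finset.card_pos.2 ⟨b₁, hbe.1⟩
        omega
      rw [hcard]
      exact le_indepNum _ u hindep'
    · -- not both: just embed s
      have hindep' : ∀ p ∈ s.image Sum.inl, ∀ q ∈ s.image Sum.inl,
          ¬ (SimpleGraph.fromRel rel).Adj p q := by
        intro p hp q hq hpq
        obtain ⟨x, hx, rfl⟩ := Finset.mem_image.1 hp
        obtain ⟨y, hy, rfl⟩ := Finset.mem_image.1 hq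
        obtain ⟨hne, hG | ⟨rfl, rfl⟩ | ⟨rfl, rfl⟩⟩ := (hadj_ll x y).1 hpq
        · exact hs x hx y hy hG
        · exact hbe ⟨hx, hy⟩
        · exact hbe ⟨hy, hx⟩
      have hcard : s.card = (s.image (Sum.inl : V → V ⊕ Unit)).card :=
        (Finset.card_image_of_injective s Sum.inl_injective).symm
      rw [hcard]
      exact le_indepNum _ _ hindep'
end

section
/- Let G be a finite simple graph with a linear order ≺ on V(G) and let G² be its 2-subdivision. Order the vertices of G² so that all right dummies precede all core vertices, all core vertices precede all left dummies, the core vertices keep their order from G, and the right dummies (respectively, the left dummies) are ordered among themselves by an arbitrary fixed linear order. Then the resulting ordered graph contains no four vertices a ≺ b ≺ c ≺ d such that ab, ad, and cd are all edges (i.e., it contains no ordered copy of the pattern \badc as a subgraph). -/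
/-- Order the 2-subdivision `G²` of an ordered graph `G` so that all right
dummies precede all core vertices, which precede all left dummies, with the core
vertices keeping their order from `G` (the dummies are ordered among themselves by an
arbitrary fixed linear order). Then the resulting ordered graph contains no four
vertices `a ≺ b ≺ c ≺ d` with `ab, ad, cd` all edges (no ordered copy of `badc`). -/
theorem stmt_14 {V W : Type*} [Fintype V] [LinearOrder V] [LinearOrder W]
    (G : SimpleGraph V) (G2 : SimpleGraph W)
    (u v : G.edgeSet → V)
    (hends : ∀ e : G.edgeSet, (e : Sym2 V) = s(u e, v e) ∧ u e < v e)
    (core : V → W) (ldum rdum : G.edgeSet → W)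
    (hcore : StrictMono core)
    (hldum : Function.Injective ldum) (hrdum : Function.Injective rdum)
    (h_rc : ∀ (e : G.edgeSet) (x : V), rdum e < core x)
    (h_cl : ∀ (x : V) (e : G.edgeSet), core x < ldum e)
    (hsurj : ∀ w : W, (∃ x, w = core x) ∨ (∃ e, w = ldum e) ∨ (∃ e, w = rdum e))
    (hadj : ∀ w w' : W, G2.Adj w w' ↔ ∃ e : G.edgeSet,
      ((w = core (u e) ∧ w' = ldum e) ∨ (w = ldum e ∧ w' = core (u e)) ∨
       (w = ldum e ∧ w' = rdum e) ∨ (w = rdum e ∧ w' = ldum e) ∨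
       (w = rdum e ∧ w' = core (v e)) ∨ (w = core (v e) ∧ w' = rdum e))) :
    ¬ ∃ a b c d : W, a < b ∧ b < c ∧ c < d ∧ G2.Adj a b ∧ G2.Adj a d ∧ G2.Adj c d := by
  rintro ⟨a, b, c, d, hab, hbc, hcd, Hab, Had, Hcd⟩
  have lt_rl : ∀ e e' : G.edgeSet, rdum e < ldum e' :=
    fun e e' => (h_rc e (u e)).trans (h_cl (u e) e')
  obtain ⟨e2, h2⟩ := (hadj a d).1 Had
  rcases h2 with ⟨ha, hd⟩ | ⟨ha, hd⟩ | ⟨ha, hd⟩ | ⟨ha, hd⟩ | ⟨ha, hd⟩ | ⟨ha, hd⟩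
  · -- a = core (u e2), d = ldum e2
    subst ha; subst hd
    obtain ⟨e3, h3⟩ := (hadj c (ldum e2)).1 Hcd
    rcases h3 with ⟨hc, hd3⟩ | ⟨hc, hd3⟩ | ⟨hc, hd3⟩ | ⟨hc, hd3⟩ | ⟨hc, hd3⟩ | ⟨hc, hd3⟩
    · obtain rfl := hldum hd3
      subst hc
      exact lt_irrefl _ (hab.trans hbc)
    · exact (h_cl _ _).ne' hd3
    · exact (lt_rl _ _).ne' hd3
    · subst hc
      exact lt_asymm (hab.trans hbc) (h_rc _ _)
    · exact (h_cl _ _).ne' hd3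
    · exact (lt_rl _ _).ne' hd3
  · -- a = ldum e2, d = core (u e2)
    subst ha; subst hd
    exact lt_asymm (h_cl _ _) (hab.trans (hbc.trans hcd))
  · -- a = ldum e2, d = rdum e2
    subst ha; subst hd
    exact lt_asymm (lt_rl _ _) (hab.trans (hbc.trans hcd))
  · -- a = rdum e2, d = ldum e2
    subst ha; subst hd
    obtain ⟨e1, h1⟩ := (hadj (rdum e2) b).1 Hab
    rcases h1 with ⟨ha1, hb⟩ | ⟨ha1, hb⟩ | ⟨ha1, hb⟩ | ⟨ha1, hb⟩ | ⟨ha1, hb⟩ | ⟨ha1, hb⟩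
    · exact (h_rc _ _).ne ha1
    · exact (lt_rl _ _).ne ha1
    · exact (lt_rl _ _).ne ha1
    · obtain rfl := hrdum ha1
      subst hb
      exact lt_irrefl _ (hbc.trans hcd)
    · obtain rfl := hrdum ha1
      subst hb
      obtain ⟨e3, h3⟩ := (hadj c (ldum e2)).1 Hcd
      rcases h3 with ⟨hc, hd3⟩ | ⟨hc, hd3⟩ | ⟨hc, hd3⟩ | ⟨hc, hd3⟩ | ⟨hc, hd3⟩ | ⟨hc, hd3⟩
      · obtain rfl := hldum hd3
        subst hc
        exact lt_asymm (hcore.lt_iff_lt.mp hbc) (hends e2).2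
      · exact (h_cl _ _).ne' hd3
      · exact (lt_rl _ _).ne' hd3
      · subst hc
        exact lt_asymm hbc (h_rc _ _)
      · exact (h_cl _ _).ne' hd3
      · exact (lt_rl _ _).ne' hd3
    · exact (h_rc _ _).ne ha1
  · -- a = rdum e2, d = core (v e2)
    subst ha; subst hd
    obtain ⟨e3, h3⟩ := (hadj c (core (v e2))).1 Hcd
    rcases h3 with ⟨hc, hd3⟩ | ⟨hc, hd3⟩ | ⟨hc, hd3⟩ | ⟨hc, hd3⟩ | ⟨hc, hd3⟩ | ⟨hc, hd3⟩
    · exact (h_cl _ _).ne hd3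
    · subst hc
      exact lt_asymm hcd (h_cl _ _)
    · exact (h_rc _ _).ne' hd3
    · exact (h_cl _ _).ne hd3
    · subst hc
      obtain ⟨e1, h1⟩ := (hadj (rdum e2) b).1 Hab
      rcases h1 with ⟨ha1, hb⟩ | ⟨ha1, hb⟩ | ⟨ha1, hb⟩ | ⟨ha1, hb⟩ | ⟨ha1, hb⟩ | ⟨ha1, hb⟩
      · exact (h_rc _ _).ne ha1
      · exact (lt_rl _ _).ne ha1
      · exact (lt_rl _ _).ne ha1
      · subst hb
        exact lt_asymm hbc (lt_rl _ _)
      · subst hb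
        exact lt_asymm hbc (h_rc _ _)
      · exact (h_rc _ _).ne ha1
    · exact (h_rc _ _).ne' hd3
  · -- a = core (v e2), d = rdum e2
    subst ha; subst hd
    exact lt_asymm (h_rc _ _) (hab.trans (hbc.trans hcd))
end

section
/- Let G be a finite simple graph with a linear order ≺ on V(G) and let G² be its 2-subdivision. Order the vertices of G² so that all right dummies precede all core vertices, all core vertices precede all left dummies, the core vertices keep their order from G, and the right dummies (respectively, the left dummies) are ordered among themselves by an arbitrary fixed linear order. Then the resulting ordered graph contains no six vertices v₁ ≺ v₂ ≺ v₃ ≺ v₄ ≺ v₅ ≺ v₆ such that v₁v₂, v₃v₄, and v₅v₆ are all edges (i.e., it contains no ordered copy of the pattern \aabbcc as a subgraph). -/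
/-- Order the 2-subdivision `G²` of an ordered graph `G` so that all right
dummies precede all core vertices, which precede all left dummies, with the core
vertices keeping their order from `G` (the dummies are ordered among themselves by an
arbitrary fixed linear order). Then the resulting ordered graph contains no six
vertices `v₁ ≺ v₂ ≺ v₃ ≺ v₄ ≺ v₅ ≺ v₆` with `v₁v₂, v₃v₄, v₅v₆` all edges
(no ordered copy of `aabbcc`). -/
theorem stmt_15 {V W : Type*} [Fintype V] [LinearOrder V] [LinearOrder W]
    (G : SimpleGraph V) (G2 : SimpleGraph W)
    (u v : G.edgeSet → V)
    (hends : ∀ e : G.edgeSet, (e : Sym2 V) = s(u e, v e) ∧ u e < v e)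
    (core : V → W) (ldum rdum : G.edgeSet → W)
    (hcore : StrictMono core)
    (hldum : Function.Injective ldum) (hrdum : Function.Injective rdum)
    (h_rc : ∀ (e : G.edgeSet) (x : V), rdum e < core x)
    (h_cl : ∀ (x : V) (e : G.edgeSet), core x < ldum e)
    (hsurj : ∀ w : W, (∃ x, w = core x) ∨ (∃ e, w = ldum e) ∨ (∃ e, w = rdum e))
    (hadj : ∀ w w' : W, G2.Adj w w' ↔ ∃ e : G.edgeSet,
      ((w = core (u e) ∧ w' = ldum e) ∨ (w = ldum e ∧ w' = core (u e)) ∨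
       (w = ldum e ∧ w' = rdum e) ∨ (w = rdum e ∧ w' = ldum e) ∨
       (w = rdum e ∧ w' = core (v e)) ∨ (w = core (v e) ∧ w' = rdum e))) :
    ¬ ∃ v₁ v₂ v₃ v₄ v₅ v₆ : W, v₁ < v₂ ∧ v₂ < v₃ ∧ v₃ < v₄ ∧ v₄ < v₅ ∧ v₅ < v₆ ∧
      G2.Adj v₁ v₂ ∧ G2.Adj v₃ v₄ ∧ G2.Adj v₅ v₆ := by
  rintro ⟨v₁, v₂, v₃, v₄, v₅, v₆, h12, h23, h34, h45, h56, a12, a34, a56⟩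
  -- classify each edge by its ordered endpoints
  have classify : ∀ a b : W, G2.Adj a b → a < b →
      (∃ e, a = core (u e) ∧ b = ldum e) ∨ (∃ e, a = rdum e ∧ b = ldum e) ∨
      (∃ e, a = rdum e ∧ b = core (v e)) := by
    intro a b hab hlt
    rw [hadj] at hab
    obtain ⟨e, h⟩ := hab
    rcases h with ⟨ha, hb⟩ | ⟨ha, hb⟩ | ⟨ha, hb⟩ | ⟨ha, hb⟩ | ⟨ha, hb⟩ | ⟨ha, hb⟩ <;>
      subst ha <;> subst hb
    · exact Or.inl ⟨e, rfl, rfl⟩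
    · exact absurd (h_cl (u e) e) hlt.asymm
    · exact absurd ((h_rc e (u e)).trans (h_cl (u e) e)) hlt.asymm
    · exact Or.inr (Or.inl ⟨e, rfl, rfl⟩)
    · exact Or.inr (Or.inr ⟨e, rfl, rfl⟩)
    · exact absurd (h_rc e (v e)) hlt.asymm
  rcases classify _ _ a34 h34 with ⟨e, h3, h4⟩ | ⟨e, h3, h4⟩ | ⟨e, h3, h4⟩
  · -- v₄ is a left dummy: contradiction with v₅, smaller endpoint of third edge
    subst h3; subst h4
    rcases classify _ _ a56 h56 with ⟨f, h5, _⟩ | ⟨f, h5, _⟩ | ⟨f, h5, _⟩ <;> subst h5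
    · exact absurd (h_cl (u f) e) h45.asymm
    · exact absurd ((h_rc f (u e)).trans (h_cl (u e) e)) h45.asymm
    · exact absurd ((h_rc f (u e)).trans (h_cl (u e) e)) h45.asymm
  · subst h3; subst h4
    rcases classify _ _ a56 h56 with ⟨f, h5, _⟩ | ⟨f, h5, _⟩ | ⟨f, h5, _⟩ <;> subst h5
    · exact absurd (h_cl (u f) e) h45.asymm
    · exact absurd ((h_rc f (u e)).trans (h_cl (u e) e)) h45.asymm
    · exact absurd ((h_rc f (u e)).trans (h_cl (u e) e)) h45.asymm
  · -- v₃ is a right dummy: contradiction with v₂, larger endpoint of first edge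
    subst h3; subst h4
    rcases classify _ _ a12 h12 with ⟨f, _, h2⟩ | ⟨f, _, h2⟩ | ⟨f, _, h2⟩ <;> subst h2
    · exact absurd ((h_rc e (u f)).trans (h_cl (u f) f)) h23.asymm
    · exact absurd ((h_rc e (u f)).trans (h_cl (u f) f)) h23.asymm
    · exact absurd (h_rc e (v f)) h23.asymm
end

section
/- Let G be a finite simple graph with a linear order ≺ on V(G) and let G² be its 2-subdivision. Order the vertices of G² so that the core vertices come first, keeping their order from G, followed by all left dummies ordered by the lexicographic order of their corresponding edges, followed by all right dummies ordered by the lexicographic order of their corresponding edges. Then the resulting ordered graph contains no six vertices v₁ ≺ v₂ ≺ v₃ ≺ v₄ ≺ v₅ ≺ v₆ such that v₁v₆, v₂v₃, and v₄v₅ are all edges (i.e., it contains no ordered copy of the pattern \abbcca as a subgraph). -/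
/-- Order the 2-subdivision `G²` of an ordered graph `G` so that the core
vertices come first (keeping their order from `G`), followed by all left dummies in the
lexicographic order of their edges, followed by all right dummies in the lexicographic
order of their edges. Then the resulting ordered graph contains no six vertices
`v₁ ≺ v₂ ≺ v₃ ≺ v₄ ≺ v₅ ≺ v₆` with `v₁v₆, v₂v₃, v₄v₅` all edges
(no ordered copy of `abbcca`). -/
theorem stmt_16 {V W : Type*} [Fintype V] [LinearOrder V] [LinearOrder W]
    (G : SimpleGraph V) (G2 : SimpleGraph W)
    (u v : G.edgeSet → V)
    (hends : ∀ e : G.edgeSet, (e : Sym2 V) = s(u e, v e) ∧ u e < v e)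
    (core : V → W) (ldum rdum : G.edgeSet → W)
    (hcore : StrictMono core)
    (hldum : Function.Injective ldum) (hrdum : Function.Injective rdum)
    (h_cl : ∀ (x : V) (e : G.edgeSet), core x < ldum e)
    (h_lr : ∀ e f : G.edgeSet, ldum e < rdum f)
    (hlex_l : ∀ e f : G.edgeSet,
      ldum e < ldum f ↔ (u e < u f ∨ (u e = u f ∧ v e < v f)))
    (hlex_r : ∀ e f : G.edgeSet,
      rdum e < rdum f ↔ (u e < u f ∨ (u e = u f ∧ v e < v f)))
    (hsurj : ∀ w : W, (∃ x, w = core x) ∨ (∃ e, w = ldum e) ∨ (∃ e, w = rdum e))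
    (hadj : ∀ w w' : W, G2.Adj w w' ↔ ∃ e : G.edgeSet,
      ((w = core (u e) ∧ w' = ldum e) ∨ (w = ldum e ∧ w' = core (u e)) ∨
       (w = ldum e ∧ w' = rdum e) ∨ (w = rdum e ∧ w' = ldum e) ∨
       (w = rdum e ∧ w' = core (v e)) ∨ (w = core (v e) ∧ w' = rdum e))) :
    ¬ ∃ v₁ v₂ v₃ v₄ v₅ v₆ : W, v₁ < v₂ ∧ v₂ < v₃ ∧ v₃ < v₄ ∧ v₄ < v₅ ∧ v₅ < v₆ ∧
      G2.Adj v₁ v₆ ∧ G2.Adj v₂ v₃ ∧ G2.Adj v₄ v₅ := by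
  rintro ⟨v₁, v₂, v₃, v₄, v₅, v₆, h12, h23, h34, h45, h56, a16, a23, a45⟩
  have hLC : ∀ (e : G.edgeSet) (x : V), ldum e < core x → False := fun e x h =>
    absurd h (h_cl x e).asymm
  have hRL : ∀ (e f : G.edgeSet), rdum e < ldum f → False := fun e f h =>
    absurd h (h_lr f e).asymm
  have hRC : ∀ (e : G.edgeSet) (x : V), rdum e < core x → False := fun e x h =>
    absurd h ((h_cl x e).trans (h_lr e e)).asymm
  have cls : ∀ a b : W, G2.Adj a b → a < b → ∃ e : G.edgeSet,
      (a = core (u e) ∧ b = ldum e) ∨ (a = ldum e ∧ b = rdum e) ∨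
      (a = core (v e) ∧ b = rdum e) := by
    intro a b hab hlt
    obtain ⟨e, h⟩ := (hadj a b).1 hab
    refine ⟨e, ?_⟩
    rcases h with ⟨ha, hb⟩ | ⟨ha, hb⟩ | ⟨ha, hb⟩ | ⟨ha, hb⟩ | ⟨ha, hb⟩ | ⟨ha, hb⟩
    · exact Or.inl ⟨ha, hb⟩
    · exact absurd hlt (by rw [ha, hb]; exact (h_cl _ e).asymm)
    · exact Or.inr (Or.inl ⟨ha, hb⟩)
    · exact absurd hlt (by rw [ha, hb]; exact (h_lr e e).asymm)
    · exact absurd hlt (by rw [ha, hb]; exact ((h_cl _ e).trans (h_lr e e)).asymm)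
    · exact Or.inr (Or.inr ⟨ha, hb⟩)
  have h16 : v₁ < v₆ := h12.trans (h23.trans (h34.trans (h45.trans h56)))
  obtain ⟨e, he⟩ := cls v₁ v₆ a16 h16
  obtain ⟨f, hf⟩ := cls v₂ v₃ a23 h23
  obtain ⟨g, hg⟩ := cls v₄ v₅ a45 h45
  rcases he with ⟨he1, he6⟩ | ⟨he1, he6⟩ | ⟨he1, he6⟩ <;>
    rcases hf with ⟨hf2, hf3⟩ | ⟨hf2, hf3⟩ | ⟨hf2, hf3⟩ <;>
      rcases hg with ⟨hg4, hg5⟩ | ⟨hg4, hg5⟩ | ⟨hg4, hg5⟩ <;>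
        subst he1 <;> subst he6 <;> subst hf2 <;> subst hf3 <;> subst hg4 <;> subst hg5 <;>
    try first
      | exact hRL _ _ h12 | exact hLC _ _ h12 | exact hRC _ _ h12
      | exact hRL _ _ h23 | exact hLC _ _ h23 | exact hRC _ _ h23
      | exact hRL _ _ h34 | exact hLC _ _ h34 | exact hRC _ _ h34
      | exact hRL _ _ h45 | exact hLC _ _ h45 | exact hRC _ _ h45
      | exact hRL _ _ h56 | exact hLC _ _ h56 | exact hRC _ _ h56
  -- remaining case: v₁ = core (v e), v₆ = rdum e, v₂ = core (u f), v₃ = ldum f,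
  -- v₄ = ldum g, v₅ = rdum g
  have hve_uf : v e < u f := hcore.lt_iff_lt.mp h12
  have hfg := (hlex_l f g).mp h34
  have hge := (hlex_r g e).mp h56
  have hufg : u f ≤ u g := by
    rcases hfg with h | ⟨h, _⟩
    exacts [h.le, h.le]
  have huge : u g ≤ u e := by
    rcases hge with h | ⟨h, _⟩
    exacts [h.le, h.le]
  exact absurd (((hends e).2.trans hve_uf).trans_le (hufg.trans huge)) (lt_irrefl _)
end

section
/- Let G be a finite simple graph with a linear order ≺ on V(G) and let G² be its 2-subdivision. Order the vertices of G² so that the core vertices come first, keeping their order from G, followed by all left dummies ordered by the lexicographic order of their corresponding edges, followed by all right dummies ordered by the lexicographic order of their corresponding edges. Then the resulting ordered graph contains no six vertices v₁ ≺ v₂ ≺ v₃ ≺ v₄ ≺ v₅ ≺ v₆ such that v₁v₂, v₃v₄, and v₅v₆ are all edges (i.e., it contains no ordered copy of the pattern \aabbcc as a subgraph). -/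
/-- Order the 2-subdivision `G²` of an ordered graph `G` so that the core
vertices come first (keeping their order from `G`), followed by all left dummies in the
lexicographic order of their edges, followed by all right dummies in the lexicographic
order of their edges. Then the resulting ordered graph contains no six vertices
`v₁ ≺ v₂ ≺ v₃ ≺ v₄ ≺ v₅ ≺ v₆` with `v₁v₂, v₃v₄, v₅v₆` all edges
(no ordered copy of `aabbcc`). -/
theorem stmt_17 {V W : Type*} [Fintype V] [LinearOrder V] [LinearOrder W]
    (G : SimpleGraph V) (G2 : SimpleGraph W)
    (u v : G.edgeSet → V)
    (hends : ∀ e : G.edgeSet, (e : Sym2 V) = s(u e, v e) ∧ u e < v e)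
    (core : V → W) (ldum rdum : G.edgeSet → W)
    (hcore : StrictMono core)
    (hldum : Function.Injective ldum) (hrdum : Function.Injective rdum)
    (h_cl : ∀ (x : V) (e : G.edgeSet), core x < ldum e)
    (h_lr : ∀ e f : G.edgeSet, ldum e < rdum f)
    (hlex_l : ∀ e f : G.edgeSet,
      ldum e < ldum f ↔ (u e < u f ∨ (u e = u f ∧ v e < v f)))
    (hlex_r : ∀ e f : G.edgeSet,
      rdum e < rdum f ↔ (u e < u f ∨ (u e = u f ∧ v e < v f)))
    (hsurj : ∀ w : W, (∃ x, w = core x) ∨ (∃ e, w = ldum e) ∨ (∃ e, w = rdum e))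
    (hadj : ∀ w w' : W, G2.Adj w w' ↔ ∃ e : G.edgeSet,
      ((w = core (u e) ∧ w' = ldum e) ∨ (w = ldum e ∧ w' = core (u e)) ∨
       (w = ldum e ∧ w' = rdum e) ∨ (w = rdum e ∧ w' = ldum e) ∨
       (w = rdum e ∧ w' = core (v e)) ∨ (w = core (v e) ∧ w' = rdum e))) :
    ¬ ∃ v₁ v₂ v₃ v₄ v₅ v₆ : W, v₁ < v₂ ∧ v₂ < v₃ ∧ v₃ < v₄ ∧ v₄ < v₅ ∧ v₅ < v₆ ∧
      G2.Adj v₁ v₂ ∧ G2.Adj v₃ v₄ ∧ G2.Adj v₅ v₆ := by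
  rintro ⟨v₁, v₂, v₃, v₄, v₅, v₆, h12, h23, h34, h45, h56, a12, a34, a56⟩
  have hcr : ∀ (x : V) (e : G.edgeSet), core x < rdum e :=
    fun x e => (h_cl x e).trans (h_lr e e)
  obtain ⟨e1, he1⟩ := (hadj _ _).1 a12
  obtain ⟨e2, he2⟩ := (hadj _ _).1 a34
  obtain ⟨e3, he3⟩ := (hadj _ _).1 a56
  -- v₂ is a dummy vertex
  have hv2 : v₂ = ldum e1 ∨ v₂ = rdum e1 := by
    rcases he1 with ⟨h, h'⟩|⟨h, h'⟩|⟨h, h'⟩|⟨h, h'⟩|⟨h, h'⟩|⟨h, h'⟩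
    · exact Or.inl h'
    · rw [h, h'] at h12; exact absurd h12 (asymm (h_cl _ _))
    · exact Or.inr h'
    · rw [h, h'] at h12; exact absurd h12 (asymm (h_lr _ _))
    · rw [h, h'] at h12; exact absurd h12 (asymm (hcr _ _))
    · exact Or.inr h'
  -- a dummy vertex can't be below a core vertex
  have hdc : ∀ x : V, ¬ v₂ < core x := by
    intro x hx
    rcases hv2 with h | h <;> rw [h] at hx
    · exact absurd hx (asymm (h_cl _ _))
    · exact absurd hx (asymm (hcr _ _))
  -- analyze the middle edge
  have hmid : v₃ = ldum e2 ∧ v₄ = rdum e2 := by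
    rcases he2 with ⟨h, h'⟩|⟨h, h'⟩|⟨h, h'⟩|⟨h, h'⟩|⟨h, h'⟩|⟨h, h'⟩
    · rw [h] at h23; exact absurd h23 (hdc _)
    · rw [h, h'] at h34; exact absurd h34 (asymm (h_cl _ _))
    · exact ⟨h, h'⟩
    · rw [h, h'] at h34; exact absurd h34 (asymm (h_lr _ _))
    · rw [h, h'] at h34; exact absurd h34 (asymm (hcr _ _))
    · rw [h] at h23; exact absurd h23 (hdc _)
  rw [hmid.2] at h45
  -- analyze the last edge
  rcases he3 with ⟨h, h'⟩|⟨h, h'⟩|⟨h, h'⟩|⟨h, h'⟩|⟨h, h'⟩|⟨h, h'⟩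
  · rw [h] at h45; exact absurd h45 (asymm (hcr _ _))
  · rw [h, h'] at h56; exact absurd h56 (asymm (h_cl _ _))
  · rw [h] at h45; exact absurd h45 (asymm (h_lr _ _))
  · rw [h, h'] at h56; exact absurd h56 (asymm (h_lr _ _))
  · rw [h, h'] at h56; exact absurd h56 (asymm (hcr _ _))
  · rw [h] at h45; exact absurd h45 (asymm (hcr _ _))
end

section
/- Let k ≥ 1 and let G be a finite ordered graph whose vertex set is the disjoint union of sets A, B, C with A ≺ B ≺ C. Assume that G contains no configuration of the following form: vertices a ∈ A, b, c ∈ B, d ∈ C and a k-element vertex set I ⊆ B with a ≺ b ≺ I ≺ c ≺ d, such that ac ∈ E(G), bd ∈ E(G), and no other pair of vertices among {a, b, c, d} ∪ I is adjacent. Suppose some vertex of B has a neighbor in C and some vertex of B has a neighbor in A; let u* be the first vertex of B that has a neighbor in C, let v* be the last vertex of B that has a neighbor in A, and assume u* ⪯ v*. Let S = {y ∈ B : u* ⪯ y ⪯ v*}, let E₁ be the set of edges of G with one endpoint in A and one endpoint in S, and let E₂ be the set of edges of G with one endpoint in C and one endpoint in S. Then there exists a vertex w that is an endpoint of some edge of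 E₁ ∪ E₂ such that (2k + 4) · |{e ∈ E₁ ∪ E₂ : e has an endpoint in N[w]}| ≥ |E₁| + |E₂|. -/
open Finset

lemma side_lemma {V : Type*} [Fintype V] [LinearOrder V] (G : SimpleGraph V)
    (k : ℕ) (A B C : Set V)
    (hAB : ∀ a ∈ A, ∀ b ∈ B, a < b)
    (hBC : ∀ b ∈ B, ∀ c ∈ C, b < c)
    (hfree : ¬ ∃ (a b c d : V) (I : Finset V),
      a ∈ A ∧ b ∈ B ∧ c ∈ B ∧ d ∈ C ∧ (↑I : Set V) ⊆ B ∧ I.card = k ∧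
      a < b ∧ (∀ i ∈ I, b < i ∧ i < c) ∧ c < d ∧
      G.Adj a c ∧ G.Adj b d ∧
      (∀ p q : V, (p = a ∨ p = b ∨ p = c ∨ p = d ∨ p ∈ I) →
        (q = a ∨ q = b ∨ q = c ∨ q = d ∨ q ∈ I) →
        G.Adj p q →
        ((p = a ∧ q = c) ∨ (p = c ∧ q = a) ∨ (p = b ∧ q = d) ∨ (p = d ∧ q = b))))
    (u d0 : V) (hu : u ∈ B) (hd0 : d0 ∈ C) (hadj : G.Adj u d0)
    (F : Finset (V × V))
    (hF : ∀ p ∈ F, p.1 ∈ A ∧ p.2 ∈ B ∧ u ≤ p.2 ∧ G.Adj p.1 p.2)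
    (cov : V → ℕ) (c : ℕ)
    (hcov : ∀ (w : V) (Q : Finset (V × V)), Q ⊆ F →
      (∀ p ∈ Q, p.1 = w ∨ G.Adj w p.1 ∨ p.2 = w ∨ G.Adj w p.2) → Q.card ≤ cov w)
    (hcu : cov u ≤ c) (hcd : cov d0 ≤ c)
    (hci : ∀ i : V, (∃ p ∈ F, p.2 = i) → cov i ≤ c)
    (hbig : (k + 2) * c < F.card) : False := by
  classical
  set tch : V → V × V → Prop := fun w p => p.1 = w ∨ G.Adj w p.1 ∨ p.2 = w ∨ G.Adj w p.2
    with htch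
  set P : Finset (V × V) := F.filter (fun p => ¬ tch u p ∧ ¬ tch d0 p) with hPdef
  have hPF : P ⊆ F := filter_subset _ _
  have hsplit : P.card + (F.filter (fun p => ¬ (¬ tch u p ∧ ¬ tch d0 p))).card = F.card := by
    rw [hPdef]
    exact card_filter_add_card_filter_not (p := fun p => ¬ tch u p ∧ ¬ tch d0 p)
  have hbad : (F.filter (fun p => ¬ (¬ tch u p ∧ ¬ tch d0 p))).card ≤ c + c := by
    have hsub : F.filter (fun p => ¬ (¬ tch u p ∧ ¬ tch d0 p)) ⊆
        F.filter (fun p => tch u p) ∪ F.filter (fun p => tch d0 p) := by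
      intro p hp
      rw [mem_filter] at hp
      rcases Classical.em (tch u p) with h | h
      · exact mem_union_left _ (mem_filter.mpr ⟨hp.1, h⟩)
      · exact mem_union_right _ (mem_filter.mpr ⟨hp.1, by tauto⟩)
    have hb1 : (F.filter (fun p => tch u p)).card ≤ cov u := by
      apply hcov u _ (filter_subset _ _)
      intro p hp
      have := (mem_filter.mp hp).2
      simp only [htch] at this
      exact this
    have hb2 : (F.filter (fun p => tch d0 p)).card ≤ cov d0 := by
      apply hcov d0 _ (filter_subset _ _)
      intro p hp
      have := (mem_filter.mp hp).2
      simp only [htch] at this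
      exact this
    calc (F.filter (fun p => ¬ (¬ tch u p ∧ ¬ tch d0 p))).card
        ≤ (F.filter (fun p => tch u p) ∪ F.filter (fun p => tch d0 p)).card :=
          card_le_card hsub
      _ ≤ (F.filter (fun p => tch u p)).card + (F.filter (fun p => tch d0 p)).card :=
          card_union_le _ _
      _ ≤ c + c := Nat.add_le_add (hb1.trans hcu) (hb2.trans hcd)
  have hPbig : k * c < P.card := by
    have h2 : k * c + (c + c) < P.card + (c + c) := by
      calc k * c + (c + c) = (k + 2) * c := by ring
        _ < F.card := hbig
        _ = P.card + (F.filter (fun p => ¬ (¬ tch u p ∧ ¬ tch d0 p))).card := hsplit.symm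
        _ ≤ P.card + (c + c) := Nat.add_le_add_left hbad _
    exact Nat.lt_of_add_lt_add_right h2
  have greedy : ∀ j : ℕ, j ≤ k → ∃ (I : Finset V) (R : Finset (V × V)),
      R ⊆ P ∧ I.card = j ∧ P.card ≤ R.card + j * c ∧
      (∀ i ∈ I, i ∈ B ∧ u < i ∧ ¬ G.Adj u i ∧ ¬ G.Adj d0 i) ∧
      (∀ i ∈ I, ∀ i' ∈ I, i ≠ i' → ¬ G.Adj i i') ∧
      (∀ i ∈ I, ∀ p ∈ R, i < p.2 ∧ p.1 ≠ i ∧ ¬ G.Adj i p.1 ∧ ¬ G.Adj i p.2) := by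
    intro j
    induction j with
    | zero =>
      intro _
      exact ⟨∅, P, Subset.rfl, card_empty, by simp, by simp, by simp, by simp⟩
    | succ j ih =>
      intro hjk
      obtain ⟨I, R, hRP, hIcard, hcount, hIu, hIpair, hIR⟩ := ih (Nat.le_of_succ_le hjk)
      have hRpos : 0 < R.card := by
        have hjc : j * c ≤ k * c := Nat.mul_le_mul_right _ (Nat.le_of_succ_le hjk)
        have h3 : j * c < R.card + j * c := lt_of_le_of_lt hjc (lt_of_lt_of_le hPbig hcount)
        rcases Nat.eq_zero_or_pos R.card with h0 | h0
        · rw [h0, zero_add] at h3; exact absurd h3 (lt_irrefl _)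
        · exact h0
      have hRne : R.Nonempty := card_pos.mp hRpos
      have hine : (R.image Prod.snd).Nonempty := hRne.image _
      obtain ⟨p₀, hp₀R, hp₀2⟩ : ∃ p ∈ R, p.2 = (R.image Prod.snd).min' hine := by
        have := Finset.min'_mem (R.image Prod.snd) hine
        rw [Finset.mem_image] at this
        obtain ⟨p, hp, hp2⟩ := this
        exact ⟨p, hp, hp2⟩
      set i := (R.image Prod.snd).min' hine with hidef
      have hmin : ∀ p ∈ R, i ≤ p.2 := fun p hp => Finset.min'_le _ _ (mem_image_of_mem _ hp)
      have hp₀P := hRP hp₀R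
      have hp₀F := hPF hp₀P
      have hclean := (mem_filter.mp hp₀P).2
      obtain ⟨hcl1, hcl2⟩ := hclean
      simp only [htch, not_or] at hcl1 hcl2
      set R' := R.filter (fun p => ¬ tch i p) with hR'def
      have hR'R : R' ⊆ R := filter_subset _ _
      have hRcard : R.card ≤ R'.card + c := by
        have hsp : R'.card + (R.filter (fun p => ¬ ¬ tch i p)).card = R.card := by
          rw [hR'def]
          exact card_filter_add_card_filter_not (p := fun p => ¬ tch i p)
        have hb : (R.filter (fun p => ¬ ¬ tch i p)).card ≤ cov i := by
          apply hcov i _ ((filter_subset _ _).trans (hRP.trans hPF))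
          intro p hp
          have := not_not.mp (mem_filter.mp hp).2
          simp only [htch] at this
          exact this
        have hc2 : cov i ≤ c := hci i ⟨p₀, hp₀F, hp₀2⟩
        omega
      have hiprops : i ∈ B ∧ u < i ∧ ¬ G.Adj u i ∧ ¬ G.Adj d0 i := by
        obtain ⟨hA1, hB2, hle, _⟩ := hF p₀ hp₀F
        refine ⟨hp₀2 ▸ hB2, ?_, hp₀2 ▸ hcl1.2.2.2, hp₀2 ▸ hcl2.2.2.2⟩
        have : u < p₀.2 := lt_of_le_of_ne hle (fun h => hcl1.2.2.1 h.symm)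
        exact hp₀2 ▸ this
      have hinotI : i ∉ I := by
        intro hiI
        have := (hIR i hiI p₀ hp₀R).1
        rw [hp₀2] at this
        exact lt_irrefl _ this
      refine ⟨insert i I, R', hR'R.trans hRP,
        by rw [card_insert_of_notMem hinotI, hIcard], ?_, ?_, ?_, ?_⟩
      · have hm : (j + 1) * c = j * c + c := Nat.succ_mul j c
        calc P.card ≤ R.card + j * c := hcount
          _ ≤ (R'.card + c) + j * c := Nat.add_le_add_right hRcard _
          _ = R'.card + (j + 1) * c := by rw [hm]; ring
      · intro x hx
        rcases mem_insert.mp hx with rfl | hx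
        · exact hiprops
        · exact hIu x hx
      · intro x hx y hy hxy
        rcases mem_insert.mp hx with rfl | hx <;> rcases mem_insert.mp hy with rfl | hy
        · exact absurd rfl hxy
        · have := (hIR y hy p₀ hp₀R).2.2.2
          rw [hp₀2] at this
          exact fun h => this h.symm
        · have := (hIR x hx p₀ hp₀R).2.2.2
          rw [hp₀2] at this
          exact this
        · exact hIpair x hx y hy hxy
      · intro x hx p hp
        have hpR := hR'R hp
        rcases mem_insert.mp hx with rfl | hx
        · have hnt : ¬ tch i p := by
            have := (mem_filter.mp hp).2
            exact this
          simp only [htch, not_or] at hnt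
          exact ⟨lt_of_le_of_ne (hmin p hpR) (fun h => hnt.2.2.1 h.symm),
            hnt.1, hnt.2.1, hnt.2.2.2⟩
        · exact hIR x hx p hpR
  obtain ⟨I, R, hRP, hIcard, hcount, hIu, hIpair, hIR⟩ := greedy k le_rfl
  have hRpos : 0 < R.card := by
    have h3 : k * c < R.card + k * c := lt_of_lt_of_le hPbig hcount
    rcases Nat.eq_zero_or_pos R.card with h0 | h0
    · rw [h0, zero_add] at h3; exact absurd h3 (lt_irrefl _)
    · exact h0
  obtain ⟨p, hpR⟩ := card_pos.mp hRpos
  have hpP := hRP hpR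
  have hpF := hPF hpP
  obtain ⟨hpA, hpB, hple, hpadj⟩ := hF p hpF
  obtain ⟨hcl1, hcl2⟩ := (mem_filter.mp hpP).2
  simp only [htch, not_or] at hcl1 hcl2
  apply hfree
  refine ⟨p.1, u, p.2, d0, I, hpA, hu, hpB, hd0, fun x hx => (hIu x hx).1, hIcard,
    hAB _ hpA _ hu, fun i hi => ⟨(hIu i hi).2.1, (hIR i hi p hpR).1⟩, hBC _ hpB _ hd0,
    hpadj, hadj, ?_⟩
  intro x y hx hy hxy
  rcases hx with rfl | rfl | rfl | rfl | hx <;> rcases hy with rfl | rfl | rfl | rfl | hy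
  · exact absurd hxy (G.loopless.irrefl _)
  · exact absurd hxy (fun h => hcl1.2.1 h.symm)
  · exact Or.inl ⟨rfl, rfl⟩
  · exact absurd hxy (fun h => hcl2.2.1 h.symm)
  · exact absurd hxy (fun h => (hIR y hy p hpR).2.2.1 h.symm)
  · exact absurd hxy hcl1.2.1
  · exact absurd hxy (G.loopless.irrefl _)
  · exact absurd hxy hcl1.2.2.2
  · exact Or.inr (Or.inr (Or.inl ⟨rfl, rfl⟩))
  · exact absurd hxy (hIu y hy).2.2.1
  · exact Or.inr (Or.inl ⟨rfl, rfl⟩)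
  · exact absurd hxy (fun h => hcl1.2.2.2 h.symm)
  · exact absurd hxy (G.loopless.irrefl _)
  · exact absurd hxy (fun h => hcl2.2.2.2 h.symm)
  · exact absurd hxy (fun h => (hIR y hy p hpR).2.2.2 h.symm)
  · exact absurd hxy hcl2.2.1
  · exact Or.inr (Or.inr (Or.inr ⟨rfl, rfl⟩))
  · exact absurd hxy hcl2.2.2.2
  · exact absurd hxy (G.loopless.irrefl _)
  · exact absurd hxy (hIu y hy).2.2.2
  · exact absurd hxy (hIR x hx p hpR).2.2.1
  · exact absurd hxy (fun h => (hIu x hx).2.2.1 h.symm)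
  · exact absurd hxy (hIR x hx p hpR).2.2.2
  · exact absurd hxy (fun h => (hIu x hx).2.2.2 h.symm)
  · rcases eq_or_ne x y with rfl | hne
    · exact absurd hxy (G.loopless.irrefl _)
    · exact absurd hxy (hIpair x hx y hy hne)

lemma side_lemma2 {V : Type*} [Fintype V] [LinearOrder V] (G : SimpleGraph V)
    (k : ℕ) (A B C : Set V)
    (hAB : ∀ a ∈ A, ∀ b ∈ B, a < b)
    (hBC : ∀ b ∈ B, ∀ c ∈ C, b < c)
    (hfree : ¬ ∃ (a b c d : V) (I : Finset V),
      a ∈ A ∧ b ∈ B ∧ c ∈ B ∧ d ∈ C ∧ (↑I : Set V) ⊆ B ∧ I.card = k ∧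
      a < b ∧ (∀ i ∈ I, b < i ∧ i < c) ∧ c < d ∧
      G.Adj a c ∧ G.Adj b d ∧
      (∀ p q : V, (p = a ∨ p = b ∨ p = c ∨ p = d ∨ p ∈ I) →
        (q = a ∨ q = b ∨ q = c ∨ q = d ∨ q ∈ I) →
        G.Adj p q →
        ((p = a ∧ q = c) ∨ (p = c ∧ q = a) ∨ (p = b ∧ q = d) ∨ (p = d ∧ q = b))))
    (u d0 : V) (hu : u ∈ B) (hd0 : d0 ∈ A) (hadj : G.Adj u d0)
    (F : Finset (V × V))
    (hF : ∀ p ∈ F, p.1 ∈ C ∧ p.2 ∈ B ∧ p.2 ≤ u ∧ G.Adj p.1 p.2)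
    (cov : V → ℕ) (c : ℕ)
    (hcov : ∀ (w : V) (Q : Finset (V × V)), Q ⊆ F →
      (∀ p ∈ Q, p.1 = w ∨ G.Adj w p.1 ∨ p.2 = w ∨ G.Adj w p.2) → Q.card ≤ cov w)
    (hcu : cov u ≤ c) (hcd : cov d0 ≤ c)
    (hci : ∀ i : V, (∃ p ∈ F, p.2 = i) → cov i ≤ c)
    (hbig : (k + 2) * c < F.card) : False := by
  classical
  set tch : V → V × V → Prop := fun w p => p.1 = w ∨ G.Adj w p.1 ∨ p.2 = w ∨ G.Adj w p.2
    with htch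
  set P : Finset (V × V) := F.filter (fun p => ¬ tch u p ∧ ¬ tch d0 p) with hPdef
  have hPF : P ⊆ F := filter_subset _ _
  have hsplit : P.card + (F.filter (fun p => ¬ (¬ tch u p ∧ ¬ tch d0 p))).card = F.card := by
    rw [hPdef]
    exact card_filter_add_card_filter_not (p := fun p => ¬ tch u p ∧ ¬ tch d0 p)
  have hbad : (F.filter (fun p => ¬ (¬ tch u p ∧ ¬ tch d0 p))).card ≤ c + c := by
    have hsub : F.filter (fun p => ¬ (¬ tch u p ∧ ¬ tch d0 p)) ⊆
        F.filter (fun p => tch u p) ∪ F.filter (fun p => tch d0 p) := by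
      intro p hp
      rw [mem_filter] at hp
      rcases Classical.em (tch u p) with h | h
      · exact mem_union_left _ (mem_filter.mpr ⟨hp.1, h⟩)
      · exact mem_union_right _ (mem_filter.mpr ⟨hp.1, by tauto⟩)
    have hb1 : (F.filter (fun p => tch u p)).card ≤ cov u := by
      apply hcov u _ (filter_subset _ _)
      intro p hp
      have := (mem_filter.mp hp).2
      simp only [htch] at this
      exact this
    have hb2 : (F.filter (fun p => tch d0 p)).card ≤ cov d0 := by
      apply hcov d0 _ (filter_subset _ _)
      intro p hp
      have := (mem_filter.mp hp).2
      simp only [htch] at this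
      exact this
    calc (F.filter (fun p => ¬ (¬ tch u p ∧ ¬ tch d0 p))).card
        ≤ (F.filter (fun p => tch u p) ∪ F.filter (fun p => tch d0 p)).card :=
          card_le_card hsub
      _ ≤ (F.filter (fun p => tch u p)).card + (F.filter (fun p => tch d0 p)).card :=
          card_union_le _ _
      _ ≤ c + c := Nat.add_le_add (hb1.trans hcu) (hb2.trans hcd)
  have hPbig : k * c < P.card := by
    have h2 : k * c + (c + c) < P.card + (c + c) := by
      calc k * c + (c + c) = (k + 2) * c := by ring
        _ < F.card := hbig
        _ = P.card + (F.filter (fun p => ¬ (¬ tch u p ∧ ¬ tch d0 p))).card := hsplit.symm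
        _ ≤ P.card + (c + c) := Nat.add_le_add_left hbad _
    exact Nat.lt_of_add_lt_add_right h2
  have greedy : ∀ j : ℕ, j ≤ k → ∃ (I : Finset V) (R : Finset (V × V)),
      R ⊆ P ∧ I.card = j ∧ P.card ≤ R.card + j * c ∧
      (∀ i ∈ I, i ∈ B ∧ i < u ∧ ¬ G.Adj u i ∧ ¬ G.Adj d0 i) ∧
      (∀ i ∈ I, ∀ i' ∈ I, i ≠ i' → ¬ G.Adj i i') ∧
      (∀ i ∈ I, ∀ p ∈ R, p.2 < i ∧ p.1 ≠ i ∧ ¬ G.Adj i p.1 ∧ ¬ G.Adj i p.2) := by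
    intro j
    induction j with
    | zero =>
      intro _
      exact ⟨∅, P, Subset.rfl, card_empty, by simp, by simp, by simp, by simp⟩
    | succ j ih =>
      intro hjk
      obtain ⟨I, R, hRP, hIcard, hcount, hIu, hIpair, hIR⟩ := ih (Nat.le_of_succ_le hjk)
      have hRpos : 0 < R.card := by
        have hjc : j * c ≤ k * c := Nat.mul_le_mul_right _ (Nat.le_of_succ_le hjk)
        have h3 : j * c < R.card + j * c := lt_of_le_of_lt hjc (lt_of_lt_of_le hPbig hcount)
        rcases Nat.eq_zero_or_pos R.card with h0 | h0
        · rw [h0, zero_add] at h3; exact absurd h3 (lt_irrefl _)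
        · exact h0
      have hRne : R.Nonempty := card_pos.mp hRpos
      have hine : (R.image Prod.snd).Nonempty := hRne.image _
      obtain ⟨p₀, hp₀R, hp₀2⟩ : ∃ p ∈ R, p.2 = (R.image Prod.snd).max' hine := by
        have := Finset.max'_mem (R.image Prod.snd) hine
        rw [Finset.mem_image] at this
        obtain ⟨p, hp, hp2⟩ := this
        exact ⟨p, hp, hp2⟩
      set i := (R.image Prod.snd).max' hine with hidef
      have hmin : ∀ p ∈ R, p.2 ≤ i := fun p hp => Finset.le_max' _ _ (mem_image_of_mem _ hp)
      have hp₀P := hRP hp₀R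
      have hp₀F := hPF hp₀P
      have hclean := (mem_filter.mp hp₀P).2
      obtain ⟨hcl1, hcl2⟩ := hclean
      simp only [htch, not_or] at hcl1 hcl2
      set R' := R.filter (fun p => ¬ tch i p) with hR'def
      have hR'R : R' ⊆ R := filter_subset _ _
      have hRcard : R.card ≤ R'.card + c := by
        have hsp : R'.card + (R.filter (fun p => ¬ ¬ tch i p)).card = R.card := by
          rw [hR'def]
          exact card_filter_add_card_filter_not (p := fun p => ¬ tch i p)
        have hb : (R.filter (fun p => ¬ ¬ tch i p)).card ≤ cov i := by
          apply hcov i _ ((filter_subset _ _).trans (hRP.trans hPF))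
          intro p hp
          have := not_not.mp (mem_filter.mp hp).2
          simp only [htch] at this
          exact this
        have hc2 : cov i ≤ c := hci i ⟨p₀, hp₀F, hp₀2⟩
        omega
      have hiprops : i ∈ B ∧ i < u ∧ ¬ G.Adj u i ∧ ¬ G.Adj d0 i := by
        obtain ⟨hA1, hB2, hle, _⟩ := hF p₀ hp₀F
        refine ⟨hp₀2 ▸ hB2, ?_, hp₀2 ▸ hcl1.2.2.2, hp₀2 ▸ hcl2.2.2.2⟩
        have : p₀.2 < u := lt_of_le_of_ne hle hcl1.2.2.1
        exact hp₀2 ▸ this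
      have hinotI : i ∉ I := by
        intro hiI
        have := (hIR i hiI p₀ hp₀R).1
        rw [hp₀2] at this
        exact lt_irrefl _ this
      refine ⟨insert i I, R', hR'R.trans hRP,
        by rw [card_insert_of_notMem hinotI, hIcard], ?_, ?_, ?_, ?_⟩
      · have hm : (j + 1) * c = j * c + c := Nat.succ_mul j c
        calc P.card ≤ R.card + j * c := hcount
          _ ≤ (R'.card + c) + j * c := Nat.add_le_add_right hRcard _
          _ = R'.card + (j + 1) * c := by rw [hm]; ring
      · intro x hx
        rcases mem_insert.mp hx with rfl | hx
        · exact hiprops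
        · exact hIu x hx
      · intro x hx y hy hxy
        rcases mem_insert.mp hx with rfl | hx <;> rcases mem_insert.mp hy with rfl | hy
        · exact absurd rfl hxy
        · have := (hIR y hy p₀ hp₀R).2.2.2
          rw [hp₀2] at this
          exact fun h => this h.symm
        · have := (hIR x hx p₀ hp₀R).2.2.2
          rw [hp₀2] at this
          exact this
        · exact hIpair x hx y hy hxy
      · intro x hx p hp
        have hpR := hR'R hp
        rcases mem_insert.mp hx with rfl | hx
        · have hnt : ¬ tch i p := by
            have := (mem_filter.mp hp).2
            exact this
          simp only [htch, not_or] at hnt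
          exact ⟨lt_of_le_of_ne (hmin p hpR) hnt.2.2.1,
            hnt.1, hnt.2.1, hnt.2.2.2⟩
        · exact hIR x hx p hpR
  obtain ⟨I, R, hRP, hIcard, hcount, hIu, hIpair, hIR⟩ := greedy k le_rfl
  have hRpos : 0 < R.card := by
    have h3 : k * c < R.card + k * c := lt_of_lt_of_le hPbig hcount
    rcases Nat.eq_zero_or_pos R.card with h0 | h0
    · rw [h0, zero_add] at h3; exact absurd h3 (lt_irrefl _)
    · exact h0
  obtain ⟨p, hpR⟩ := card_pos.mp hRpos
  have hpP := hRP hpR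
  have hpF := hPF hpP
  obtain ⟨hpA, hpB, hple, hpadj⟩ := hF p hpF
  obtain ⟨hcl1, hcl2⟩ := (mem_filter.mp hpP).2
  simp only [htch, not_or] at hcl1 hcl2
  apply hfree
  refine ⟨d0, p.2, u, p.1, I, hd0, hpB, hu, hpA, fun x hx => (hIu x hx).1, hIcard,
    hAB _ hd0 _ hpB, fun i hi => ⟨(hIR i hi p hpR).1, (hIu i hi).2.1⟩, hBC _ hu _ hpA,
    hadj.symm, hpadj.symm, ?_⟩
  intro x y hx hy hxy
  rcases hx with rfl | rfl | rfl | rfl | hx <;> rcases hy with rfl | rfl | rfl | rfl | hy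
  · exact absurd hxy (G.loopless.irrefl _)
  · exact absurd hxy hcl2.2.2.2
  · exact Or.inl ⟨rfl, rfl⟩
  · exact absurd hxy hcl2.2.1
  · exact absurd hxy (hIu y hy).2.2.2
  · exact absurd hxy (fun h => hcl2.2.2.2 h.symm)
  · exact absurd hxy (G.loopless.irrefl _)
  · exact absurd hxy (fun h => hcl1.2.2.2 h.symm)
  · exact Or.inr (Or.inr (Or.inl ⟨rfl, rfl⟩))
  · exact absurd hxy (fun h => (hIR y hy p hpR).2.2.2 h.symm)
  · exact Or.inr (Or.inl ⟨rfl, rfl⟩)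
  · exact absurd hxy hcl1.2.2.2
  · exact absurd hxy (G.loopless.irrefl _)
  · exact absurd hxy hcl1.2.1
  · exact absurd hxy (hIu y hy).2.2.1
  · exact absurd hxy (fun h => hcl2.2.1 h.symm)
  · exact Or.inr (Or.inr (Or.inr ⟨rfl, rfl⟩))
  · exact absurd hxy (fun h => hcl1.2.1 h.symm)
  · exact absurd hxy (G.loopless.irrefl _)
  · exact absurd hxy (fun h => (hIR y hy p hpR).2.2.1 h.symm)
  · exact absurd hxy (fun h => (hIu x hx).2.2.2 h.symm)
  · exact absurd hxy (hIR x hx p hpR).2.2.2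
  · exact absurd hxy (fun h => (hIu x hx).2.2.1 h.symm)
  · exact absurd hxy (hIR x hx p hpR).2.2.1
  · rcases eq_or_ne x y with rfl | hne
    · exact absurd hxy (G.loopless.irrefl _)
    · exact absurd hxy (hIpair x hx y hy hne)

/-- In an ordered graph whose vertex set is the disjoint union of
`A ≺ B ≺ C`, containing no configuration `a ≺ b ≺ I ≺ c ≺ d` (`a ∈ A`, `b, c ∈ B`,
`d ∈ C`, `I ⊆ B` of size `k`, edges `ac, bd`, no other adjacency), if `u*` is the first
vertex of `B` with a neighbour in `C`, `v*` the last vertex of `B` with a neighbour in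
`A`, and `u* ⪯ v*`, then with `S = {y ∈ B : u* ⪯ y ⪯ v*}`, `E₁` the edges between `A`
and `S`, `E₂` the edges between `C` and `S`, there is an endpoint `w` of an edge of
`E₁ ∪ E₂` whose closed neighbourhood intersects at least a `1/(2k+4)`-fraction of
`E₁ ∪ E₂`. -/
theorem stmt_18 {V : Type*} [Fintype V] [LinearOrder V] (G : SimpleGraph V)
    (k : ℕ) (hk : 1 ≤ k) (A B C : Set V)
    (hcover : ∀ x : V, x ∈ A ∪ B ∪ C)
    (hAB : ∀ a ∈ A, ∀ b ∈ B, a < b)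
    (hBC : ∀ b ∈ B, ∀ c ∈ C, b < c)
    (hfree : ¬ ∃ (a b c d : V) (I : Finset V),
      a ∈ A ∧ b ∈ B ∧ c ∈ B ∧ d ∈ C ∧ (↑I : Set V) ⊆ B ∧ I.card = k ∧
      a < b ∧ (∀ i ∈ I, b < i ∧ i < c) ∧ c < d ∧
      G.Adj a c ∧ G.Adj b d ∧
      (∀ p q : V, (p = a ∨ p = b ∨ p = c ∨ p = d ∨ p ∈ I) →
        (q = a ∨ q = b ∨ q = c ∨ q = d ∨ q ∈ I) →
        G.Adj p q →
        ((p = a ∧ q = c) ∨ (p = c ∧ q = a) ∨ (p = b ∧ q = d) ∨ (p = d ∧ q = b))))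
    (ustar vstar : V)
    (hustar : ustar ∈ B ∧ (∃ c ∈ C, G.Adj ustar c) ∧
      (∀ y ∈ B, (∃ c ∈ C, G.Adj y c) → ustar ≤ y))
    (hvstar : vstar ∈ B ∧ (∃ a ∈ A, G.Adj vstar a) ∧
      (∀ y ∈ B, (∃ a ∈ A, G.Adj y a) → y ≤ vstar))
    (huv : ustar ≤ vstar)
    (E₁ E₂ : Set (Sym2 V))
    (hE₁ : E₁ = {e : Sym2 V | e ∈ G.edgeSet ∧
      ∃ x ∈ A, ∃ s : V, s ∈ B ∧ ustar ≤ s ∧ s ≤ vstar ∧ e = s(x, s)})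
    (hE₂ : E₂ = {e : Sym2 V | e ∈ G.edgeSet ∧
      ∃ x ∈ C, ∃ s : V, s ∈ B ∧ ustar ≤ s ∧ s ≤ vstar ∧ e = s(x, s)}) :
    ∃ w : V, (∃ e ∈ E₁ ∪ E₂, w ∈ e) ∧
      E₁.ncard + E₂.ncard ≤
        (2 * k + 4) * ((E₁ ∪ E₂) ∩ {e : Sym2 V | ∃ p ∈ e, p = w ∨ G.Adj w p}).ncard := by
  classical
  obtain ⟨huB, ⟨d0, hd0C, hud0⟩, _⟩ := hustar
  obtain ⟨hvB, ⟨a0, ha0A, hva0⟩, _⟩ := hvstar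
  by_contra hcon
  push_neg at hcon
  set covf : V → ℕ :=
    fun w => ((E₁ ∪ E₂) ∩ {e : Sym2 V | ∃ p ∈ e, p = w ∨ G.Adj w p}).ncard with hcovf
  set F₁ : Finset (V × V) := Finset.univ.filter
    (fun p => p.1 ∈ A ∧ p.2 ∈ B ∧ ustar ≤ p.2 ∧ p.2 ≤ vstar ∧ G.Adj p.1 p.2) with hF₁def
  set F₂ : Finset (V × V) := Finset.univ.filter
    (fun p => p.1 ∈ C ∧ p.2 ∈ B ∧ ustar ≤ p.2 ∧ p.2 ≤ vstar ∧ G.Adj p.1 p.2) with hF₂def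
  have hmemF₁ : ∀ p : V × V, p ∈ F₁ ↔
      (p.1 ∈ A ∧ p.2 ∈ B ∧ ustar ≤ p.2 ∧ p.2 ≤ vstar ∧ G.Adj p.1 p.2) := by
    intro p; rw [hF₁def]; simp
  have hmemF₂ : ∀ p : V × V, p ∈ F₂ ↔
      (p.1 ∈ C ∧ p.2 ∈ B ∧ ustar ≤ p.2 ∧ p.2 ≤ vstar ∧ G.Adj p.1 p.2) := by
    intro p; rw [hF₂def]; simp
  have hset1 : E₁ = ↑(F₁.image (fun p => s(p.1, p.2))) := by
    ext e
    rw [hE₁, Finset.coe_image]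
    constructor
    · rintro ⟨he, x, hxA, s, hsB, hus, hsv, rfl⟩
      exact ⟨(x, s), (hmemF₁ _).mpr ⟨hxA, hsB, hus, hsv, (G.mem_edgeSet).mp he⟩, rfl⟩
    · rintro ⟨p, hp, rfl⟩
      obtain ⟨h1, h2, h3, h4, h5⟩ := (hmemF₁ p).mp hp
      exact ⟨(G.mem_edgeSet).mpr h5, p.1, h1, p.2, h2, h3, h4, rfl⟩
  have hset2 : E₂ = ↑(F₂.image (fun p => s(p.1, p.2))) := by
    ext e
    rw [hE₂, Finset.coe_image]
    constructor
    · rintro ⟨he, x, hxC, s, hsB, hus, hsv, rfl⟩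
      exact ⟨(x, s), (hmemF₂ _).mpr ⟨hxC, hsB, hus, hsv, (G.mem_edgeSet).mp he⟩, rfl⟩
    · rintro ⟨p, hp, rfl⟩
      obtain ⟨h1, h2, h3, h4, h5⟩ := (hmemF₂ p).mp hp
      exact ⟨(G.mem_edgeSet).mpr h5, p.1, h1, p.2, h2, h3, h4, rfl⟩
  have hinj1 : Set.InjOn (fun p : V × V => s(p.1, p.2)) ↑F₁ := by
    intro p hp q hq h
    simp only [Sym2.eq_iff] at h
    obtain ⟨hp1, hp2, -⟩ := (hmemF₁ p).mp hp
    obtain ⟨hq1, hq2, -⟩ := (hmemF₁ q).mp hq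
    rcases h with ⟨h1, h2⟩ | ⟨h1, h2⟩
    · exact Prod.ext h1 h2
    · have : p.1 ∈ B := by rw [h1]; exact hq2
      exact absurd (hAB p.1 hp1 p.1 this) (lt_irrefl _)
  have hinj2 : Set.InjOn (fun p : V × V => s(p.1, p.2)) ↑F₂ := by
    intro p hp q hq h
    simp only [Sym2.eq_iff] at h
    obtain ⟨hp1, hp2, -⟩ := (hmemF₂ p).mp hp
    obtain ⟨hq1, hq2, -⟩ := (hmemF₂ q).mp hq
    rcases h with ⟨h1, h2⟩ | ⟨h1, h2⟩
    · exact Prod.ext h1 h2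
    · have : p.1 ∈ B := by rw [h1]; exact hq2
      exact absurd (hBC p.1 this p.1 hp1) (lt_irrefl _)
  have hcard1 : E₁.ncard = F₁.card := by
    rw [hset1, Set.ncard_coe_finset, Finset.card_image_of_injOn hinj1]
  have hcard2 : E₂.ncard = F₂.card := by
    rw [hset2, Set.ncard_coe_finset, Finset.card_image_of_injOn hinj2]
  have hE1sub : ∀ p ∈ F₁, s(p.1, p.2) ∈ E₁ := by
    intro p hp
    rw [hset1]
    exact Finset.mem_coe.mpr (Finset.mem_image_of_mem _ hp)
  have hE2sub : ∀ p ∈ F₂, s(p.1, p.2) ∈ E₂ := by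
    intro p hp
    rw [hset2]
    exact Finset.mem_coe.mpr (Finset.mem_image_of_mem _ hp)
  have he2mem : s(d0, ustar) ∈ E₂ := by
    rw [hE₂]
    exact ⟨(G.mem_edgeSet).mpr hud0.symm, d0, hd0C, ustar, huB, le_rfl, huv, rfl⟩
  have he1mem : s(a0, vstar) ∈ E₁ := by
    rw [hE₁]
    exact ⟨(G.mem_edgeSet).mpr hva0.symm, a0, ha0A, vstar, hvB, huv, le_rfl, rfl⟩
  have hm1 : 1 ≤ E₁.ncard + E₂.ncard := by
    have : 0 < E₂.ncard := (Set.ncard_pos (Set.toFinite _)).mpr ⟨_, he2mem⟩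
    omega
  set cb := (E₁.ncard + E₂.ncard - 1) / (2 * k + 4) with hcbdef
  have hend : ∀ w : V, (∃ e ∈ E₁ ∪ E₂, w ∈ e) → covf w ≤ cb := by
    intro w hw
    have h := hcon w hw
    rw [hcbdef, Nat.le_div_iff_mul_le (by omega : 0 < 2 * k + 4)]
    have h2 : (2 * k + 4) * covf w < E₁.ncard + E₂.ncard := h
    rw [mul_comm]
    exact Nat.le_sub_one_of_lt h2
  have hcovQ : ∀ (FF : Finset (V × V)), (∀ p ∈ FF, s(p.1, p.2) ∈ E₁ ∪ E₂) →
      Set.InjOn (fun p : V × V => s(p.1, p.2)) ↑FF →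
      ∀ (w : V) (Q : Finset (V × V)), Q ⊆ FF →
      (∀ p ∈ Q, p.1 = w ∨ G.Adj w p.1 ∨ p.2 = w ∨ G.Adj w p.2) → Q.card ≤ covf w := by
    intro FF hFFsub hFFinj w Q hQF hQt
    have hinj : Set.InjOn (fun p : V × V => s(p.1, p.2)) ↑Q :=
      hFFinj.mono (Finset.coe_subset.mpr hQF)
    have hsub : ↑(Q.image (fun p => s(p.1, p.2))) ⊆
        (E₁ ∪ E₂) ∩ {e : Sym2 V | ∃ p ∈ e, p = w ∨ G.Adj w p} := by
      intro e he
      rw [Finset.coe_image] at he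
      obtain ⟨p, hpQ, rfl⟩ := he
      have hpQ' : p ∈ Q := Finset.mem_coe.mp hpQ
      refine ⟨hFFsub p (hQF hpQ'), ?_⟩
      rcases hQt p hpQ' with h | h | h | h
      · exact ⟨p.1, Sym2.mem_mk_left _ _, Or.inl h⟩
      · exact ⟨p.1, Sym2.mem_mk_left _ _, Or.inr h⟩
      · exact ⟨p.2, Sym2.mem_mk_right _ _, Or.inl h⟩
      · exact ⟨p.2, Sym2.mem_mk_right _ _, Or.inr h⟩
    calc Q.card = (Q.image (fun p => s(p.1, p.2))).card :=
          (Finset.card_image_of_injOn hinj).symm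
      _ = (↑(Q.image (fun p => s(p.1, p.2))) : Set (Sym2 V)).ncard :=
          (Set.ncard_coe_finset _).symm
      _ ≤ covf w := Set.ncard_le_ncard hsub (Set.toFinite _)
  have hcovQ1 := hcovQ F₁ (fun p hp => Or.inl (hE1sub p hp)) hinj1
  have hcovQ2 := hcovQ F₂ (fun p hp => Or.inr (hE2sub p hp)) hinj2
  have hcu : covf ustar ≤ cb := hend ustar ⟨_, Or.inr he2mem, Sym2.mem_mk_right _ _⟩
  have hcd0 : covf d0 ≤ cb := hend d0 ⟨_, Or.inr he2mem, Sym2.mem_mk_left _ _⟩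
  have hcv : covf vstar ≤ cb := hend vstar ⟨_, Or.inl he1mem, Sym2.mem_mk_right _ _⟩
  have hca0 : covf a0 ≤ cb := hend a0 ⟨_, Or.inl he1mem, Sym2.mem_mk_left _ _⟩
  have hci1 : ∀ i : V, (∃ p ∈ F₁, p.2 = i) → covf i ≤ cb := by
    rintro i ⟨p, hp, rfl⟩
    exact hend p.2 ⟨s(p.1, p.2), Or.inl (hE1sub p hp), Sym2.mem_mk_right _ _⟩
  have hci2 : ∀ i : V, (∃ p ∈ F₂, p.2 = i) → covf i ≤ cb := by
    rintro i ⟨p, hp, rfl⟩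
    exact hend p.2 ⟨s(p.1, p.2), Or.inr (hE2sub p hp), Sym2.mem_mk_right _ _⟩
  have hside1 : F₁.card ≤ (k + 2) * cb := by
    by_contra hcon1
    push_neg at hcon1
    exact side_lemma G k A B C hAB hBC hfree ustar d0 huB hd0C hud0 F₁
      (fun p hp => by
        obtain ⟨h1, h2, h3, h4, h5⟩ := (hmemF₁ p).mp hp
        exact ⟨h1, h2, h3, h5⟩)
      covf cb hcovQ1 hcu hcd0 hci1 hcon1
  have hside2 : F₂.card ≤ (k + 2) * cb := by
    by_contra hcon2
    push_neg at hcon2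
    exact side_lemma2 G k A B C hAB hBC hfree vstar a0 hvB ha0A hva0 F₂
      (fun p hp => by
        obtain ⟨h1, h2, h3, h4, h5⟩ := (hmemF₂ p).mp hp
        exact ⟨h1, h2, h4, h5⟩)
      covf cb hcovQ2 hcv hca0 hci2 hcon2
  have hfin : E₁.ncard + E₂.ncard ≤ (2 * k + 4) * cb := by
    rw [hcard1, hcard2]
    calc F₁.card + F₂.card ≤ (k + 2) * cb + (k + 2) * cb := Nat.add_le_add hside1 hside2
      _ = (2 * k + 4) * cb := by ring
  have hle : (2 * k + 4) * cb ≤ E₁.ncard + E₂.ncard - 1 := by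
    rw [hcbdef, mul_comm]
    exact Nat.div_mul_le_self _ _
  omega
end

section
/- Let m ≥ 1 and let C be the ordered graph with vertices y₁ ≺ y₂ ≺ … ≺ y_{2m} ≺ z₁ ≺ z₂ ≺ … ≺ z_{2m} whose edges are exactly y_i z_i for each i ∈ {1, …, 2m} and z_{2j-1} z_{2j} for each j ∈ {1, …, m}. Then C contains no five vertices v₁ ≺ v₂ ≺ v₃ ≺ v₄ ≺ v₅ with v₁v₅ ∈ E(C) and v₂v₄ ∈ E(C); that is, C contains no ordered copy of the pattern \abxba (a nested pair of edges with a vertex strictly between the endpoints of the inner edge) as a subgraph. -/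
/-- The caboose graph `C`: vertices `0, …, 4m - 1` (in the order of `Fin (4 * m)`),
where vertex `i` for `i < 2m` is `y_{i+1}` and vertex `2m + j` for `j < 2m` is
`z_{j+1}`. Its edges are exactly `y_i z_i` for `i ∈ {1, …, 2m}` (i.e. `i ~ i + 2m`)
and `z_{2j-1} z_{2j}` for `j ∈ {1, …, m}` (i.e. `2m + 2(j-1) ~ 2m + 2(j-1) + 1`). -/
def cabooseGraph (m : ℕ) : SimpleGraph (Fin (4 * m)) :=
  SimpleGraph.fromRel (fun a b =>
    ((a : ℕ) < 2 * m ∧ (b : ℕ) = (a : ℕ) + 2 * m) ∨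
    (2 * m ≤ (a : ℕ) ∧ (a : ℕ) % 2 = 0 ∧ (b : ℕ) = (a : ℕ) + 1))

/-- The caboose graph contains no five vertices
`v₁ ≺ v₂ ≺ v₃ ≺ v₄ ≺ v₅` with `v₁v₅` and `v₂v₄` edges (no ordered copy of the pattern
`abxba`, a nested pair of edges with a vertex strictly inside the inner edge). -/
theorem stmt_19 (m : ℕ) (hm : 1 ≤ m) :
    ¬ ∃ v₁ v₂ v₃ v₄ v₅ : Fin (4 * m), v₁ < v₂ ∧ v₂ < v₃ ∧ v₃ < v₄ ∧ v₄ < v₅ ∧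
      (cabooseGraph m).Adj v₁ v₅ ∧ (cabooseGraph m).Adj v₂ v₄ := by
  rintro ⟨v₁, v₂, v₃, v₄, v₅, h12, h23, h34, h45, h15, h24⟩
  simp only [cabooseGraph, SimpleGraph.fromRel_adj, ne_eq] at h15 h24
  rw [Fin.lt_def] at h12 h23 h34 h45
  omega
end
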